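/- arXiv:2602.11816 — 3 statements merged into one kernel-verified Lean document; each statement's English description precedes it below -/
import Mathlib

section
/- Let p and q be distinct odd primes with p ≥ 5, q > p and q = 2p - 3, and let n = pq. Then the metric dimension of the barycentric subdivision of the zero divisor graph of Z_n equals q - 1, i.e. dim(BS(Γ(Z_{pq}))) = q - 1. -/
open SimpleGraph

/-- The nonzero zero-divisors of `ZMod n`. -/
def ZDVert (n : ℕ) : Type :=
  {a : ZMod n // a ≠ 0 ∧ ∃ b : ZMod n, b ≠ 0 ∧ a * b = 0}

/-- The zero-divisor graph of `ZMod n`: vertices are the nonzero zero-divisors,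
with distinct vertices adjacent iff their product is zero. -/
def zdGraph (n : ℕ) : SimpleGraph (ZDVert n) where
  Adj a b := a ≠ b ∧ a.1 * b.1 = 0
  symm := by
    constructor
    rintro a b ⟨hab, h⟩
    exact ⟨hab.symm, by rwa [mul_comm] at h⟩
  loopless := by
    constructor
    rintro a ⟨hne, -⟩
    exact hne rfl

/-- The barycentric subdivision of a simple graph: vertices are the disjoint union
of the original vertices and the edges, an original vertex is adjacent to an
edge-vertex iff it is an endpoint of that edge, and there are no other adjacencies. -/
def BS {V : Type*} (G : SimpleGraph V) : SimpleGraph (V ⊕ G.edgeSet) where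
  Adj x y :=
    (∃ (v : V) (e : G.edgeSet), x = Sum.inl v ∧ y = Sum.inr e ∧ v ∈ e.1) ∨
    (∃ (v : V) (e : G.edgeSet), x = Sum.inr e ∧ y = Sum.inl v ∧ v ∈ e.1)
  symm := by
    constructor
    rintro x y (⟨v, e, rfl, rfl, h⟩ | ⟨v, e, rfl, rfl, h⟩)
    · exact Or.inr ⟨v, e, rfl, rfl, h⟩
    · exact Or.inl ⟨v, e, rfl, rfl, h⟩
  loopless := by
    constructor
    rintro x (⟨v, e, rfl, h, -⟩ | ⟨v, e, rfl, h, -⟩) <;> simp at h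

/-- A set of vertices is resolving if any two distinct vertices are distinguished
by their distance to some vertex of the set. -/
def IsResolving {V : Type*} (G : SimpleGraph V) (W : Set V) : Prop :=
  ∀ x y : V, x ≠ y → ∃ w ∈ W, G.dist x w ≠ G.dist y w

/-- The metric dimension: the least cardinality of a (finite) resolving set. -/
noncomputable def metricDim {V : Type*} (G : SimpleGraph V) : ℕ :=
  sInf {k | ∃ W : Finset V, IsResolving G ↑W ∧ W.card = k}

/-- The independent metric dimension: the least cardinality of a (finite)
resolving set that is also an independent set. -/
noncomputable def indepMetricDim {V : Type*} (G : SimpleGraph V) : ℕ :=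
  sInf {k | ∃ W : Finset V, IsResolving G ↑W ∧
    (∀ a ∈ W, ∀ b ∈ W, ¬ G.Adj a b) ∧ W.card = k}

open scoped Classical

section CB
variable {V : Type*} {m n : ℕ} {G : SimpleGraph V} {a : Fin m → V} {b : Fin n → V}

structure CBS (G : SimpleGraph V) (a : Fin m → V) (b : Fin n → V) : Prop where
  ha : Function.Injective a
  hb : Function.Injective b
  hab : ∀ i j, a i ≠ b j
  hcov : ∀ v, (∃ i, v = a i) ∨ (∃ j, v = b j)
  adj_ab : ∀ i j, G.Adj (a i) (b j)
  nadj_aa : ∀ i i', ¬ G.Adj (a i) (a i')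
  nadj_bb : ∀ j j', ¬ G.Adj (b j) (b j')

namespace CBS

lemma exists_coords (h : CBS G a b) (e : G.edgeSet) : ∃ i j, e.1 = s(a i, b j) := by
  obtain ⟨E, hE⟩ := e
  induction E using Sym2.ind with
  | _ x y =>
    simp only
    rw [SimpleGraph.mem_edgeSet] at hE
    rcases h.hcov x with ⟨i, rfl⟩ | ⟨j, rfl⟩ <;> rcases h.hcov y with ⟨i', rfl⟩ | ⟨j', rfl⟩
    · exact absurd hE (h.nadj_aa i i')
    · exact ⟨i, j', rfl⟩
    · exact ⟨i', j, Sym2.eq_swap⟩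
    · exact absurd hE (h.nadj_bb j j')

noncomputable def ro (h : CBS G a b) (e : G.edgeSet) : Fin m := (h.exists_coords e).choose

noncomputable def co (h : CBS G a b) (e : G.edgeSet) : Fin n :=
  (h.exists_coords e).choose_spec.choose

lemma spec (h : CBS G a b) (e : G.edgeSet) : e.1 = s(a (h.ro e), b (h.co e)) :=
  (h.exists_coords e).choose_spec.choose_spec

lemma mem_iff (h : CBS G a b) {v : V} {e : G.edgeSet} :
    v ∈ e.1 ↔ v = a (h.ro e) ∨ v = b (h.co e) := by
  rw [h.spec e, Sym2.mem_iff]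

def mkE (h : CBS G a b) (i : Fin m) (j : Fin n) : G.edgeSet :=
  ⟨s(a i, b j), (SimpleGraph.mem_edgeSet _).2 (h.adj_ab i j)⟩

lemma coords_unique (h : CBS G a b) {i i' : Fin m} {j j' : Fin n}
    (hs : s(a i, b j) = s(a i', b j')) : i = i' ∧ j = j' := by
  rw [Sym2.eq_iff] at hs
  rcases hs with ⟨h1, h2⟩ | ⟨h1, h2⟩
  · exact ⟨h.ha h1, h.hb h2⟩
  · exact absurd h1 (h.hab i j')

lemma ro_mkE (h : CBS G a b) (i : Fin m) (j : Fin n) : h.ro (h.mkE i j) = i :=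
  ((h.coords_unique (h.spec (h.mkE i j)).symm).1)

lemma co_mkE (h : CBS G a b) (i : Fin m) (j : Fin n) : h.co (h.mkE i j) = j :=
  ((h.coords_unique (h.spec (h.mkE i j)).symm).2)

lemma eq_mkE (h : CBS G a b) (e : G.edgeSet) : e = h.mkE (h.ro e) (h.co e) :=
  Subtype.ext (h.spec e)

lemma edge_ext_iff (h : CBS G a b) {e f : G.edgeSet} :
    e = f ↔ h.ro e = h.ro f ∧ h.co e = h.co f := by
  constructor
  · rintro rfl; exact ⟨rfl, rfl⟩
  · rintro ⟨h1, h2⟩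
    rw [h.eq_mkE e, h.eq_mkE f, h1, h2]

lemma mem_mkE (h : CBS G a b) {v : V} {i : Fin m} {j : Fin n} :
    v ∈ (h.mkE i j).1 ↔ v = a i ∨ v = b j := by
  rw [h.mem_iff, h.ro_mkE, h.co_mkE]

end CBS
end CB

section CB2
variable {V : Type*} {m n : ℕ} {G : SimpleGraph V} {a : Fin m → V} {b : Fin n → V}

namespace CBS

/-- side predicate -/
def isA (a : Fin m → V) (v : V) : Prop := ∃ i, v = a i

lemma isA_a (h : CBS G a b) (i : Fin m) : isA a (a i) := ⟨i, rfl⟩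

lemma not_isA_b (h : CBS G a b) (j : Fin n) : ¬ isA a (b j) := by
  rintro ⟨i, hi⟩; exact h.hab i j hi.symm

/-- the distance function on `BS G` -/
noncomputable def D (h : CBS G a b) : (V ⊕ G.edgeSet) → (V ⊕ G.edgeSet) → ℕ
  | .inl u, .inl v => if u = v then 0 else if (isA a u ↔ isA a v) then 4 else 2
  | .inl v, .inr e => if v ∈ e.1 then 1 else 3
  | .inr e, .inl v => if v ∈ e.1 then 1 else 3
  | .inr e, .inr f => if e = f then 0 else if (h.ro e = h.ro f ∨ h.co e = h.co f) then 2 else 4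

lemma bs_adj_ve {v : V} {e : G.edgeSet} (hv : v ∈ e.1) :
    (BS G).Adj (Sum.inl v) (Sum.inr e) := Or.inl ⟨v, e, rfl, rfl, hv⟩

lemma bs_adj_ev {v : V} {e : G.edgeSet} (hv : v ∈ e.1) :
    (BS G).Adj (Sum.inr e) (Sum.inl v) := Or.inr ⟨v, e, rfl, rfl, hv⟩

/-- two vertices on an edge with different membership patterns -/
lemma mem_mem_same_side (h : CBS G a b) {u v : V} {e : G.edgeSet}
    (hu : u ∈ e.1) (hv : v ∈ e.1) (hne : u ≠ v) : ¬ (isA a u ↔ isA a v) := by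
  rw [h.mem_iff] at hu hv
  rcases hu with rfl | rfl <;> rcases hv with rfl | rfl
  · exact absurd rfl hne
  · simp [h.isA_a, h.not_isA_b]
  · simp [h.isA_a, h.not_isA_b]
  · exact absurd rfl hne

lemma mem_mem_edges (h : CBS G a b) {v : V} {e f : G.edgeSet}
    (he : v ∈ e.1) (hf : v ∈ f.1) : h.ro e = h.ro f ∨ h.co e = h.co f := by
  rw [h.mem_iff] at he hf
  rcases he with he | he <;> rcases hf with hf | hf
  · exact Or.inl (h.ha (he ▸ hf))
  · exact absurd (he.symm.trans hf) (h.hab _ _)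
  · exact absurd (hf.symm.trans he) (h.hab _ _)
  · exact Or.inr (h.hb (he ▸ hf))

lemma shares_mem (h : CBS G a b) {e f : G.edgeSet}
    (hs : h.ro e = h.ro f ∨ h.co e = h.co f) : ∃ v, v ∈ e.1 ∧ v ∈ f.1 := by
  rcases hs with hs | hs
  · exact ⟨a (h.ro e), h.mem_iff.2 (Or.inl rfl), h.mem_iff.2 (Or.inl (by rw [hs]))⟩
  · exact ⟨b (h.co e), h.mem_iff.2 (Or.inr rfl), h.mem_iff.2 (Or.inr (by rw [hs]))⟩

lemma D_self (h : CBS G a b) (x : V ⊕ G.edgeSet) : h.D x x = 0 := by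
  rcases x with u | e <;> simp [D]

/-- Lipschitz step: `D` decreases by at most 1 along edges of `BS G`. -/
lemma D_step (h : CBS G a b) {x z : V ⊕ G.edgeSet} (hxz : (BS G).Adj x z)
    (y : V ⊕ G.edgeSet) : h.D x y ≤ h.D z y + 1 := by
  rcases hxz with ⟨v, e, rfl, rfl, hv⟩ | ⟨v, e, rfl, rfl, hv⟩
  · -- x = inl v, z = inr e, v ∈ e
    rcases y with u | f
    · -- D (inl v) (inl u) ≤ D (inr e) (inl u) + 1
      simp only [D]
      by_cases h1 : v = u
      · simp [h1]
      · rw [if_neg h1]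
        by_cases h2 : u ∈ e.1
        · -- u, v ∈ e, u ≠ v: opposite sides, D = 2; D(e,u)=1
          rw [if_neg (h.mem_mem_same_side hv h2 h1), if_pos h2]
        · rw [if_neg h2]
          split <;> omega
    · -- D (inl v) (inr f) ≤ D (inr e) (inr f) + 1
      simp only [D]
      by_cases h1 : v ∈ f.1
      · rw [if_pos h1]; split <;> [omega; (split <;> omega)]
      · rw [if_neg h1]
        by_cases h2 : e = f
        · exact absurd (h2 ▸ hv) h1
        · rw [if_neg h2]
          by_cases h3 : h.ro e = h.ro f ∨ h.co e = h.co f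
        
          · rw [if_pos h3]
          · rw [if_neg h3]; omega
  · -- x = inr e, z = inl v, v ∈ e
    rcases y with u | f
    · simp only [D]
      by_cases h2 : u ∈ e.1
      · rw [if_pos h2]; split <;> [omega; (split <;> omega)]
      · rw [if_neg h2]
        by_cases h1 : v = u
        · exact absurd (h1 ▸ hv) h2
        · rw [if_neg h1]
          by_cases h3 : isA a v ↔ isA a u
          · rw [if_pos h3]; omega
          · rw [if_neg h3]
    · simp only [D]
      by_cases h2 : e = f
      · subst h2; simp [hv]
      · rw [if_neg h2]
        by_cases h3 : h.ro e = h.ro f ∨ h.co e = h.co f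
        · rw [if_pos h3]
          split <;> omega
        · rw [if_neg h3]
          have h4 : v ∉ f.1 := fun hvf => h3 (h.mem_mem_edges hv hvf)
          rw [if_neg h4]

lemma D_le_length (h : CBS G a b) {x y : V ⊕ G.edgeSet} (w : (BS G).Walk x y) :
    h.D x y ≤ w.length := by
  induction w with
  | nil => simp [h.D_self]
  | cons hadj tail ih =>
    rw [SimpleGraph.Walk.length_cons]
    calc h.D _ _ ≤ h.D _ _ + 1 := h.D_step hadj _
    _ ≤ tail.length + 1 := by omega

end CBS
end CB2

section CB3
variable {V : Type*} {m n : ℕ} {G : SimpleGraph V} {a : Fin m → V} {b : Fin n → V}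

namespace CBS

open SimpleGraph.Walk

lemma exists_walk (h : CBS G a b) (hm : 0 < m) (hn : 0 < n) (x y : V ⊕ G.edgeSet) :
    ∃ w : (BS G).Walk x y, w.length = h.D x y := by
  have i0 : Fin m := ⟨0, hm⟩
  have j0 : Fin n := ⟨0, hn⟩
  rcases x with u | e <;> rcases y with v | f
  · by_cases h1 : u = v
    · subst h1; exact ⟨nil, by simp [h.D_self]⟩
    · rcases h.hcov u with ⟨i, rfl⟩ | ⟨j, rfl⟩ <;> rcases h.hcov v with ⟨i', rfl⟩ | ⟨j', rfl⟩
      · -- both in A : length 4 via b j0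
        refine ⟨cons (bs_adj_ve (h.mem_mkE.2 (Or.inl rfl)))
          (cons (bs_adj_ev (h.mem_mkE.2 (Or.inr rfl)))
          (cons (bs_adj_ve (e := h.mkE i' j0) (h.mem_mkE.2 (Or.inr rfl)))
          (cons (bs_adj_ev (h.mem_mkE.2 (Or.inl rfl))) nil))), ?_⟩
        simp [D, h1, iff_of_true (h.isA_a i) (h.isA_a i')]
      · refine ⟨cons (bs_adj_ve (h.mem_mkE.2 (Or.inl rfl)))
          (cons (bs_adj_ev (e := h.mkE i j')  (h.mem_mkE.2 (Or.inr rfl))) nil), ?_⟩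
        simp [D, h1, h.isA_a i, h.not_isA_b j']
      · refine ⟨cons (bs_adj_ve (h.mem_mkE.2 (Or.inr rfl)))
          (cons (bs_adj_ev (e := h.mkE i' j)  (h.mem_mkE.2 (Or.inl rfl))) nil), ?_⟩
        have : ¬ (isA a (b j) ↔ isA a (a i')) := by simp [h.isA_a i', h.not_isA_b j]
        simp [D, h1, this]
      · refine ⟨cons (bs_adj_ve (h.mem_mkE.2 (Or.inr rfl)))
          (cons (bs_adj_ev (h.mem_mkE.2 (Or.inl rfl)))
          (cons (bs_adj_ve (e := h.mkE i0 j') (h.mem_mkE.2 (Or.inl rfl)))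
          (cons (bs_adj_ev (h.mem_mkE.2 (Or.inr rfl))) nil))), ?_⟩
        simp [D, h1, iff_of_false (h.not_isA_b j) (h.not_isA_b j')]
  · by_cases h1 : u ∈ f.1
    · exact ⟨cons (bs_adj_ve h1) nil, by simp [D, h1]⟩
    · rcases h.hcov u with ⟨i, rfl⟩ | ⟨j, rfl⟩
      · refine ⟨cons (bs_adj_ve (h.mem_mkE.2 (Or.inl rfl)))
          (cons (bs_adj_ev (e := h.mkE i (h.co f)) (h.mem_mkE.2 (Or.inr rfl)))
          (cons (bs_adj_ve (h.mem_iff.2 (Or.inr rfl))) nil)), ?_⟩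
        simp [D, h1]
      · refine ⟨cons (bs_adj_ve (h.mem_mkE.2 (Or.inr rfl)))
          (cons (bs_adj_ev (e := h.mkE (h.ro f) j) (h.mem_mkE.2 (Or.inl rfl)))
          (cons (bs_adj_ve (h.mem_iff.2 (Or.inl rfl))) nil)), ?_⟩
        simp [D, h1]
  · by_cases h1 : v ∈ e.1
    · exact ⟨cons (bs_adj_ev h1) nil, by simp [D, h1]⟩
    · rcases h.hcov v with ⟨i, rfl⟩ | ⟨j, rfl⟩
      · refine ⟨cons (bs_adj_ev (h.mem_iff.2 (Or.inr rfl)))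
          (cons (bs_adj_ve (e := h.mkE i (h.co e)) (h.mem_mkE.2 (Or.inr rfl)))
          (cons (bs_adj_ev (h.mem_mkE.2 (Or.inl rfl))) nil)), ?_⟩
        simp [D, h1]
      · refine ⟨cons (bs_adj_ev (h.mem_iff.2 (Or.inl rfl)))
          (cons (bs_adj_ve (e := h.mkE (h.ro e) j) (h.mem_mkE.2 (Or.inl rfl)))
          (cons (bs_adj_ev (h.mem_mkE.2 (Or.inr rfl))) nil)), ?_⟩
        simp [D, h1]
  · by_cases h1 : e = f
    · subst h1; exact ⟨nil, by simp [h.D_self]⟩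
    · by_cases h2 : h.ro e = h.ro f ∨ h.co e = h.co f
      · obtain ⟨v, hv1, hv2⟩ := h.shares_mem h2
        exact ⟨cons (bs_adj_ev hv1) (cons (bs_adj_ve hv2) nil), by simp [D, h1, h2]⟩
      · refine ⟨cons (bs_adj_ev (h.mem_iff.2 (Or.inl rfl)))
          (cons (bs_adj_ve (e := h.mkE (h.ro e) (h.co f)) (h.mem_mkE.2 (Or.inl rfl)))
          (cons (bs_adj_ev (h.mem_mkE.2 (Or.inr rfl)))
          (cons (bs_adj_ve (h.mem_iff.2 (Or.inr rfl))) nil))), ?_⟩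
        simp [D, h1, h2]

theorem dist_eq (h : CBS G a b) (hm : 0 < m) (hn : 0 < n) (x y : V ⊕ G.edgeSet) :
    (BS G).dist x y = h.D x y := by
  obtain ⟨w, hw⟩ := h.exists_walk hm hn x y
  refine le_antisymm (hw ▸ SimpleGraph.dist_le w) ?_
  obtain ⟨p, hp⟩ := SimpleGraph.Reachable.exists_walk_length_eq_dist ⟨w⟩
  calc h.D x y ≤ p.length := h.D_le_length p
  _ = _ := hp

end CBS
end CB3

section CB4
variable {V : Type*} {m n : ℕ} {G : SimpleGraph V} {a : Fin m → V} {b : Fin n → V}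

namespace CBS

lemma D_v_mkE (h : CBS G a b) (v : V) (i : Fin m) (j : Fin n) :
    h.D (Sum.inl v) (Sum.inr (h.mkE i j)) = if v = a i ∨ v = b j then 1 else 3 := by
  simp [D, h.mem_mkE]

lemma D_e_mkE (h : CBS G a b) (e : G.edgeSet) (i : Fin m) (j : Fin n) :
    h.D (Sum.inr e) (Sum.inr (h.mkE i j)) =
      if e = h.mkE i j then 0 else if h.ro e = i ∨ h.co e = j then 2 else 4 := by
  simp [D, h.ro_mkE, h.co_mkE]

lemma eq_mkE_iff (h : CBS G a b) {e : G.edgeSet} {i : Fin m} {j : Fin n} :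
    e = h.mkE i j ↔ h.ro e = i ∧ h.co e = j := by
  rw [h.edge_ext_iff, h.ro_mkE, h.co_mkE]

/-- row of the canonical landmark edge in column `j` -/
def rw (hm : 2 ≤ m) (hn : n = 2 * m - 2) (j : Fin n) : Fin m :=
  ⟨j.1 / 2, by have := j.2; omega⟩

lemma rw_lt (hm : 2 ≤ m) (hn : n = 2 * m - 2) (j : Fin n) : (rw hm hn j).1 < m - 1 := by
  have := j.2; simp only [rw]; omega

/-- the resolving set -/
noncomputable def WU (h : CBS G a b) (hm : 2 ≤ m) (hn : n = 2 * m - 2) :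
    Finset (V ⊕ G.edgeSet) :=
  Finset.image (fun j => Sum.inr (h.mkE (rw hm hn j) j)) Finset.univ

lemma mem_WU (h : CBS G a b) (hm : 2 ≤ m) (hn : n = 2 * m - 2) (j : Fin n) :
    Sum.inr (h.mkE (rw hm hn j) j) ∈ h.WU hm hn := by
  exact Finset.mem_image_of_mem _ (Finset.mem_univ j)

lemma card_WU (h : CBS G a b) (hm : 2 ≤ m) (hn : n = 2 * m - 2) : (h.WU hm hn).card = n := by
  rw [WU, Finset.card_image_of_injective _ ?_, Finset.card_univ, Fintype.card_fin]
  intro j j' hjj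
  have h2 := (h.eq_mkE_iff.1 (Sum.inr_injective hjj)).2
  rwa [h.co_mkE] at h2

/-- column index `c` in row `i`, avoiding a given column `j` -/
lemma row_cols (hm : 2 ≤ m) (hn : n = 2 * m - 2) {i : Fin m} (hi : i.1 < m - 1) (j : Fin n) :
    ∃ c : Fin n, rw hm hn c = i ∧ c ≠ j := by
  by_cases hc : 2 * i.1 = j.1
  · refine ⟨⟨2 * i.1 + 1, by omega⟩, ?_, ?_⟩
    · apply Fin.ext; simp only [rw]; omega
    · intro hcj; have := congrArg Fin.val hcj; simp at this; omega
  · refine ⟨⟨2 * i.1, by omega⟩, ?_, ?_⟩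
    · apply Fin.ext; simp only [rw]; omega
    · intro hcj; have := congrArg Fin.val hcj; simp at this; omega

end CBS
end CB4

section CB5
variable {V : Type*} {m n : ℕ} {G : SimpleGraph V} {a : Fin m → V} {b : Fin n → V}

namespace CBS

lemma D_a_mkE (h : CBS G a b) (i' i : Fin m) (j : Fin n) :
    h.D (Sum.inl (a i')) (Sum.inr (h.mkE i j)) = if i' = i then 1 else 3 := by
  rw [h.D_v_mkE]
  congr 1
  simp [h.ha.eq_iff, h.hab i' j]

lemma D_b_mkE (h : CBS G a b) (j' : Fin n) (i : Fin m) (j : Fin n) :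
    h.D (Sum.inl (b j')) (Sum.inr (h.mkE i j)) = if j' = j then 1 else 3 := by
  rw [h.D_v_mkE]
  congr 1
  simp [h.hb.eq_iff, (h.hab i j').symm]

lemma D_e_eq0 (h : CBS G a b) {e : G.edgeSet} {i : Fin m} {j : Fin n}
    (h1 : h.ro e = i) (h2 : h.co e = j) :
    h.D (Sum.inr e) (Sum.inr (h.mkE i j)) = 0 := by
  rw [h.D_e_mkE, if_pos (h.eq_mkE_iff.2 ⟨h1, h2⟩)]

lemma D_e_eq2 (h : CBS G a b) {e : G.edgeSet} {i : Fin m} {j : Fin n}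
    (h1 : h.ro e = i ∨ h.co e = j) (h2 : ¬ (h.ro e = i ∧ h.co e = j)) :
    h.D (Sum.inr e) (Sum.inr (h.mkE i j)) = 2 := by
  rw [h.D_e_mkE, if_neg (fun hh => h2 (h.eq_mkE_iff.1 hh)), if_pos h1]

lemma D_e_eq4 (h : CBS G a b) {e : G.edgeSet} {i : Fin m} {j : Fin n}
    (h1 : h.ro e ≠ i) (h2 : h.co e ≠ j) :
    h.D (Sum.inr e) (Sum.inr (h.mkE i j)) = 4 := by
  rw [h.D_e_mkE, if_neg (fun hh => h1 (h.eq_mkE_iff.1 hh).1),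
    if_neg (by rintro (hh | hh) <;> [exact h1 hh; exact h2 hh])]

lemma parity_ne (h : CBS G a b) (v : V) (e : G.edgeSet) (i : Fin m) (j : Fin n) :
    h.D (Sum.inl v) (Sum.inr (h.mkE i j)) ≠ h.D (Sum.inr e) (Sum.inr (h.mkE i j)) := by
  rw [h.D_v_mkE, h.D_e_mkE]
  split <;> split <;> first | omega | (split <;> omega)

theorem WU_resolving (h : CBS G a b) (hm : 2 ≤ m) (hn : n = 2 * m - 2) :
    IsResolving (BS G) ↑(h.WU hm hn) := by
  have hm0 : 0 < m := by omega
  have hn0 : 0 < n := by omega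
  intro x y hxy
  suffices hs : ∃ j : Fin n, h.D x (Sum.inr (h.mkE (rw hm hn j) j)) ≠
      h.D y (Sum.inr (h.mkE (rw hm hn j) j)) by
    obtain ⟨j, hj⟩ := hs
    exact ⟨_, h.mem_WU hm hn j, by rw [h.dist_eq hm0 hn0, h.dist_eq hm0 hn0]; exact hj⟩
  rcases x with u | e <;> rcases y with v | f
  · -- vertex / vertex
    rcases h.hcov u with ⟨i, rfl⟩ | ⟨jj, rfl⟩ <;> rcases h.hcov v with ⟨i', rfl⟩ | ⟨jj', rfl⟩
    · -- a i vs a i'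
      have hii : i ≠ i' := fun hh => hxy (by rw [hh])
      by_cases hi : i.1 < m - 1
      · obtain ⟨c, hc1, -⟩ := row_cols hm hn hi ⟨0, hn0⟩
        refine ⟨c, ?_⟩
        rw [h.D_a_mkE, h.D_a_mkE, hc1, if_pos rfl, if_neg (Ne.symm hii)]
        omega
      · have hi' : i'.1 < m - 1 := by
          have h2 := i.2; have h3 := i'.2
          have : i.1 ≠ i'.1 := fun hh => hii (Fin.ext hh)
          omega
        obtain ⟨c, hc1, -⟩ := row_cols hm hn hi' ⟨0, hn0⟩
        refine ⟨c, ?_⟩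
        rw [h.D_a_mkE, h.D_a_mkE, hc1, if_pos rfl, if_neg hii]
        omega
    · -- a i vs b jj'
      by_cases hir : i = rw hm hn jj'
      · have hi : i.1 < m - 1 := by rw [hir]; exact rw_lt hm hn jj'
        obtain ⟨c, hc1, hc2⟩ := row_cols hm hn hi jj'
        refine ⟨c, ?_⟩
        rw [h.D_a_mkE, h.D_b_mkE, hc1, if_pos rfl, if_neg (Ne.symm hc2)]
        omega
      · refine ⟨jj', ?_⟩
        rw [h.D_a_mkE, h.D_b_mkE, if_pos rfl, if_neg hir]
        omega
    · -- b jj vs a i'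
      by_cases hir : i' = rw hm hn jj
      · have hi : i'.1 < m - 1 := by rw [hir]; exact rw_lt hm hn jj
        obtain ⟨c, hc1, hc2⟩ := row_cols hm hn hi jj
        refine ⟨c, ?_⟩
        rw [h.D_a_mkE, h.D_b_mkE, hc1, if_pos rfl, if_neg (Ne.symm hc2)]
        omega
      · refine ⟨jj, ?_⟩
        rw [h.D_a_mkE, h.D_b_mkE, if_pos rfl, if_neg hir]
        omega
    · -- b jj vs b jj'
      have hjj : jj ≠ jj' := fun hh => hxy (by rw [hh])
      refine ⟨jj, ?_⟩
      rw [h.D_b_mkE, h.D_b_mkE, if_pos rfl, if_neg (Ne.symm hjj)]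
      omega
  · exact ⟨⟨0, hn0⟩, h.parity_ne _ _ _ _⟩
  · exact ⟨⟨0, hn0⟩, (h.parity_ne _ _ _ _).symm⟩
  · -- edge / edge
    have hef : e ≠ f := fun hh => hxy (by rw [hh])
    by_cases he : h.ro e = rw hm hn (h.co e)
    · refine ⟨h.co e, ?_⟩
      rw [h.D_e_eq0 he rfl, h.D_e_mkE,
        if_neg (fun hh => hef ((h.eq_mkE_iff.2 ⟨he, rfl⟩).trans hh.symm))]
      split <;> omega
    · by_cases hf2 : h.ro f = rw hm hn (h.co f)
      · refine ⟨h.co f, ?_⟩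
        rw [h.D_e_eq0 hf2 rfl, h.D_e_mkE,
          if_neg (fun hh => hef (hh.trans (h.eq_mkE_iff.2 ⟨hf2, rfl⟩).symm))]
        split <;> omega
      · by_cases hjj : h.co e = h.co f
        · -- same column
          have hii : h.ro e ≠ h.ro f := fun hh => hef (h.edge_ext_iff.2 ⟨hh, hjj⟩)
          by_cases hi : (h.ro e).1 < m - 1
          · obtain ⟨c, hc1, hc2⟩ := row_cols hm hn hi (h.co e)
            refine ⟨c, ?_⟩
            have h4 : h.D (Sum.inr f) (Sum.inr (h.mkE (rw hm hn c) c)) = 4 :=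
              h.D_e_eq4 (fun hh => hii (hc1.symm.trans hh.symm))
                (fun hh => hc2 (hh.symm.trans hjj.symm))
            rw [h.D_e_eq2 (Or.inl hc1.symm) (fun hh => hc2 hh.2.symm), h4]
            omega
          · have hi' : (h.ro f).1 < m - 1 := by
              have h2 := (h.ro e).2; have h3 := (h.ro f).2
              have : (h.ro e).1 ≠ (h.ro f).1 := fun hh => hii (Fin.ext hh)
              omega
            obtain ⟨c, hc1, hc2⟩ := row_cols hm hn hi' (h.co f)
            refine ⟨c, ?_⟩
            have h4 : h.D (Sum.inr e) (Sum.inr (h.mkE (rw hm hn c) c)) = 4 :=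
              h.D_e_eq4 (fun hh => hii (hh.trans hc1))
                (fun hh => hc2 (hh.symm.trans hjj))
            rw [h.D_e_eq2 (Or.inl hc1.symm) (fun hh => hc2 hh.2.symm), h4]
            omega
        · -- different columns
          by_cases hc : rw hm hn (h.co e) = h.ro f
          · by_cases hc2 : rw hm hn (h.co f) = h.ro e
            · have hii : h.ro e ≠ h.ro f := fun hrr => he (hrr.trans hc.symm)
              have hiro : (h.ro e).1 < m - 1 := by
                rw [← hc2]; exact rw_lt hm hn (h.co f)
              obtain ⟨c, hc1, hc2'⟩ := row_cols hm hn hiro (h.co f)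
              refine ⟨c, ?_⟩
              have hce : h.co e ≠ c := fun hh =>
                hii ((hc.symm.trans ((congrArg (rw hm hn) hh).trans hc1)).symm)
              have h4 : h.D (Sum.inr f) (Sum.inr (h.mkE (rw hm hn c) c)) = 4 :=
                h.D_e_eq4 (fun hh => hii (hc1.symm.trans hh.symm)) (Ne.symm hc2')
              rw [h.D_e_eq2 (Or.inl hc1.symm) (fun hh => hce hh.2), h4]
              omega
            · refine ⟨h.co f, ?_⟩
              have h4 : h.D (Sum.inr e) (Sum.inr (h.mkE (rw hm hn (h.co f)) (h.co f))) = 4 :=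
                h.D_e_eq4 (fun hh => hc2 hh.symm) hjj
              rw [h.D_e_eq2 (Or.inr rfl) (fun hh => hf2 hh.1), h4]
              omega
          · refine ⟨h.co e, ?_⟩
            rw [h.D_e_eq2 (Or.inr rfl) (fun hh => he hh.1),
              h.D_e_eq4 (fun hh => hc hh.symm) (Ne.symm hjj)]
            omega

end CBS
end CB5

section CB6
variable {V : Type*} {m n : ℕ} {G : SimpleGraph V} {a : Fin m → V} {b : Fin n → V}

namespace CBS

/-- edge landmarks -/
noncomputable def WE {V : Type*} {G : SimpleGraph V} (W : Finset (V ⊕ G.edgeSet)) :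
    Finset G.edgeSet := W.toRight

def markedA (a : Fin m → V) {G : SimpleGraph V} (W : Finset (V ⊕ G.edgeSet)) (i : Fin m) :
    Prop := Sum.inl (a i) ∈ W
def markedB (b : Fin n → V) {G : SimpleGraph V} (W : Finset (V ⊕ G.edgeSet)) (j : Fin n) :
    Prop := Sum.inl (b j) ∈ W

noncomputable def rowE (h : CBS G a b) (W : Finset (V ⊕ G.edgeSet)) (i : Fin m) :
    Finset G.edgeSet := (WE W).filter (fun e => h.ro e = i)
noncomputable def colE (h : CBS G a b) (W : Finset (V ⊕ G.edgeSet)) (j : Fin n) :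
    Finset G.edgeSet := (WE W).filter (fun e => h.co e = j)

noncomputable def sA (a : Fin m → V) {G : SimpleGraph V} (W : Finset (V ⊕ G.edgeSet)) : ℕ :=
  (Finset.univ.filter (fun i => markedA a W i)).card
noncomputable def sB (b : Fin n → V) {G : SimpleGraph V} (W : Finset (V ⊕ G.edgeSet)) : ℕ :=
  (Finset.univ.filter (fun j => markedB b W j)).card
noncomputable def kA (h : CBS G a b) (W : Finset (V ⊕ G.edgeSet)) : ℕ :=
  (Finset.univ.filter (fun i => ¬ markedA a W i ∧ (h.rowE W i).Nonempty)).card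
noncomputable def kB (h : CBS G a b) (W : Finset (V ⊕ G.edgeSet)) : ℕ :=
  (Finset.univ.filter (fun j => ¬ markedB b W j ∧ (h.colE W j).Nonempty)).card
noncomputable def eA (h : CBS G a b) (W : Finset (V ⊕ G.edgeSet)) : ℕ :=
  (Finset.univ.filter (fun i => ¬ markedA a W i ∧ h.rowE W i = ∅)).card
noncomputable def eB (h : CBS G a b) (W : Finset (V ⊕ G.edgeSet)) : ℕ :=
  (Finset.univ.filter (fun j => ¬ markedB b W j ∧ h.colE W j = ∅)).card

def badE (h : CBS G a b) (W : Finset (V ⊕ G.edgeSet)) (e : G.edgeSet) : Prop :=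
  ¬ markedA a W (h.ro e) ∧ ¬ markedB b W (h.co e) ∧
    h.rowE W (h.ro e) = {e} ∧ h.colE W (h.co e) = {e}

noncomputable def badN (h : CBS G a b) (W : Finset (V ⊕ G.edgeSet)) : ℕ :=
  ((WE W).filter (fun e => h.badE W e)).card

lemma F1 (h : CBS G a b) (W : Finset (V ⊕ G.edgeSet)) :
    m ≤ sA a W + h.eA W + h.kA W := by
  classical
  have hsub : (Finset.univ : Finset (Fin m)) ⊆
      (Finset.univ.filter (fun i => markedA a W i)) ∪
      ((Finset.univ.filter (fun i => ¬ markedA a W i ∧ h.rowE W i = ∅)) ∪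
       (Finset.univ.filter (fun i => ¬ markedA a W i ∧ (h.rowE W i).Nonempty))) := by
    intro i _
    simp only [Finset.mem_union, Finset.mem_filter, Finset.mem_univ, true_and]
    by_cases h1 : markedA a W i
    · exact Or.inl h1
    · rcases Finset.eq_empty_or_nonempty (h.rowE W i) with h2 | h2
      · exact Or.inr (Or.inl ⟨h1, h2⟩)
      · exact Or.inr (Or.inr ⟨h1, h2⟩)
  calc m = (Finset.univ : Finset (Fin m)).card := by simp
  _ ≤ _ := Finset.card_le_card hsub
  _ ≤ _ := by
      refine (Finset.card_union_le _ _).trans ?_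
      have := Finset.card_union_le
        (Finset.univ.filter (fun i => ¬ markedA a W i ∧ h.rowE W i = ∅))
        (Finset.univ.filter (fun i => ¬ markedA a W i ∧ (h.rowE W i).Nonempty))
      simp only [sA, eA, kA]
      omega

lemma F2 (h : CBS G a b) (W : Finset (V ⊕ G.edgeSet)) :
    n ≤ sB b W + h.eB W + h.kB W := by
  classical
  have hsub : (Finset.univ : Finset (Fin n)) ⊆
      (Finset.univ.filter (fun j => markedB b W j)) ∪
      ((Finset.univ.filter (fun j => ¬ markedB b W j ∧ h.colE W j = ∅)) ∪
       (Finset.univ.filter (fun j => ¬ markedB b W j ∧ (h.colE W j).Nonempty))) := by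
    intro j _
    simp only [Finset.mem_union, Finset.mem_filter, Finset.mem_univ, true_and]
    by_cases h1 : markedB b W j
    · exact Or.inl h1
    · rcases Finset.eq_empty_or_nonempty (h.colE W j) with h2 | h2
      · exact Or.inr (Or.inl ⟨h1, h2⟩)
      · exact Or.inr (Or.inr ⟨h1, h2⟩)
  calc n = (Finset.univ : Finset (Fin n)).card := by simp
  _ ≤ _ := Finset.card_le_card hsub
  _ ≤ _ := by
      refine (Finset.card_union_le _ _).trans ?_
      have := Finset.card_union_le
        (Finset.univ.filter (fun j => ¬ markedB b W j ∧ h.colE W j = ∅))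
        (Finset.univ.filter (fun j => ¬ markedB b W j ∧ (h.colE W j).Nonempty))
      simp only [sB, eB, kB]
      omega

lemma F3 (h : CBS G a b) (W : Finset (V ⊕ G.edgeSet)) :
    sA a W + sB b W ≤ W.toLeft.card := by
  classical
  set SA := (Finset.univ.filter (fun i => markedA a W i)).image a with hSA
  set SB := (Finset.univ.filter (fun j => markedB b W j)).image b with hSB
  have hcardA : SA.card = sA a W := by
    rw [hSA, Finset.card_image_of_injective _ h.ha]; rfl
  have hcardB : SB.card = sB b W := by
    rw [hSB, Finset.card_image_of_injective _ h.hb]; rfl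
  have hdisj : Disjoint SA SB := by
    rw [Finset.disjoint_left]
    rintro v hvA hvB
    simp only [hSA, hSB, Finset.mem_image] at hvA hvB
    obtain ⟨i, -, rfl⟩ := hvA
    obtain ⟨j, -, hj⟩ := hvB
    exact h.hab i j hj.symm
  have hsub : SA ∪ SB ⊆ W.toLeft := by
    intro v hv
    rw [Finset.mem_union] at hv
    rw [Finset.mem_toLeft]
    rcases hv with hv | hv <;> simp only [hSA, hSB, Finset.mem_image] at hv <;>
      obtain ⟨i, hi, rfl⟩ := hv <;> simpa [markedA, markedB] using (Finset.mem_filter.1 hi).2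
  calc sA a W + sB b W = (SA ∪ SB).card := by
        rw [Finset.card_union_of_disjoint hdisj, hcardA, hcardB]
  _ ≤ _ := Finset.card_le_card hsub

/-- the row charge of an edge -/
noncomputable def gA (h : CBS G a b) (W : Finset (V ⊕ G.edgeSet)) (e : G.edgeSet) : ℕ :=
  if markedA a W (h.ro e) then 0 else if (h.rowE W (h.ro e)).card = 1 then 2 else 1

noncomputable def gB (h : CBS G a b) (W : Finset (V ⊕ G.edgeSet)) (e : G.edgeSet) : ℕ :=
  if markedB b W (h.co e) then 0 else if (h.colE W (h.co e)).card = 1 then 2 else 1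

lemma charge_A (h : CBS G a b) (W : Finset (V ⊕ G.edgeSet)) :
    2 * h.kA W ≤ ∑ e ∈ WE W, h.gA W e := by
  classical
  have hfib : ∑ i : Fin m, ∑ e ∈ (WE W).filter (fun e => h.ro e = i), h.gA W e
      = ∑ e ∈ WE W, h.gA W e :=
    Finset.sum_fiberwise_of_maps_to (fun e _ => Finset.mem_univ _) _
  rw [← hfib]
  have hbound : ∀ i ∈ Finset.univ.filter (fun i => ¬ markedA a W i ∧ (h.rowE W i).Nonempty),
      2 ≤ ∑ e ∈ (WE W).filter (fun e => h.ro e = i), h.gA W e := by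
    intro i hi
    rw [Finset.mem_filter] at hi
    obtain ⟨-, hun, hne⟩ := hi
    have hre : (h.rowE W i : Finset G.edgeSet) = (WE W).filter (fun e => h.ro e = i) := rfl
    by_cases hc : (h.rowE W i).card = 1
    · obtain ⟨e0, he0⟩ := Finset.card_eq_one.1 hc
      have he0m : e0 ∈ h.rowE W i := by rw [he0]; exact Finset.mem_singleton_self _
      have hro : h.ro e0 = i := (Finset.mem_filter.1 he0m).2
      rw [← hre, he0, Finset.sum_singleton]
      rw [gA, hro, if_neg hun, if_pos (by rw [hc])]
    · have hge : 2 ≤ (h.rowE W i).card := by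
        have := Finset.card_pos.2 hne; omega
      have hall : ∀ e ∈ h.rowE W i, h.gA W e = 1 := by
        intro e he
        have hro : h.ro e = i := (Finset.mem_filter.1 he).2
        rw [gA, hro, if_neg hun, if_neg hc]
      calc 2 ≤ (h.rowE W i).card := hge
      _ = ∑ e ∈ h.rowE W i, 1 := by simp
      _ = ∑ e ∈ h.rowE W i, h.gA W e := Finset.sum_congr rfl (fun e he => (hall e he).symm)
      _ = _ := by rw [hre]
  calc 2 * h.kA W = ∑ _i ∈ Finset.univ.filter
        (fun i => ¬ markedA a W i ∧ (h.rowE W i).Nonempty), 2 := by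
        rw [Finset.sum_const, kA, smul_eq_mul]; omega
  _ ≤ ∑ i ∈ Finset.univ.filter (fun i => ¬ markedA a W i ∧ (h.rowE W i).Nonempty),
        ∑ e ∈ (WE W).filter (fun e => h.ro e = i), h.gA W e := Finset.sum_le_sum hbound
  _ ≤ _ := Finset.sum_le_sum_of_subset (Finset.filter_subset _ _)

lemma charge_B (h : CBS G a b) (W : Finset (V ⊕ G.edgeSet)) :
    2 * h.kB W ≤ ∑ e ∈ WE W, h.gB W e := by
  classical
  have hfib : ∑ j : Fin n, ∑ e ∈ (WE W).filter (fun e => h.co e = j), h.gB W e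
      = ∑ e ∈ WE W, h.gB W e :=
    Finset.sum_fiberwise_of_maps_to (fun e _ => Finset.mem_univ _) _
  rw [← hfib]
  have hbound : ∀ j ∈ Finset.univ.filter (fun j => ¬ markedB b W j ∧ (h.colE W j).Nonempty),
      2 ≤ ∑ e ∈ (WE W).filter (fun e => h.co e = j), h.gB W e := by
    intro j hj
    rw [Finset.mem_filter] at hj
    obtain ⟨-, hun, hne⟩ := hj
    have hre : (h.colE W j : Finset G.edgeSet) = (WE W).filter (fun e => h.co e = j) := rfl
    by_cases hc : (h.colE W j).card = 1
    · obtain ⟨e0, he0⟩ := Finset.card_eq_one.1 hc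
      have he0m : e0 ∈ h.colE W j := by rw [he0]; exact Finset.mem_singleton_self _
      have hro : h.co e0 = j := (Finset.mem_filter.1 he0m).2
      rw [← hre, he0, Finset.sum_singleton]
      rw [gB, hro, if_neg hun, if_pos (by rw [hc])]
    · have hge : 2 ≤ (h.colE W j).card := by
        have := Finset.card_pos.2 hne; omega
      have hall : ∀ e ∈ h.colE W j, h.gB W e = 1 := by
        intro e he
        have hro : h.co e = j := (Finset.mem_filter.1 he).2
        rw [gB, hro, if_neg hun, if_neg hc]
      calc 2 ≤ (h.colE W j).card := hge
      _ = ∑ e ∈ h.colE W j, 1 := by simp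
      _ = ∑ e ∈ h.colE W j, h.gB W e := Finset.sum_congr rfl (fun e he => (hall e he).symm)
      _ = _ := by rw [hre]
  calc 2 * h.kB W = ∑ _j ∈ Finset.univ.filter
        (fun j => ¬ markedB b W j ∧ (h.colE W j).Nonempty), 2 := by
        rw [Finset.sum_const, kB, smul_eq_mul]; omega
  _ ≤ _ := Finset.sum_le_sum hbound
  _ ≤ _ := Finset.sum_le_sum_of_subset (Finset.filter_subset _ _)

lemma charge_total (h : CBS G a b) (W : Finset (V ⊕ G.edgeSet)) :
    2 * (h.kA W + h.kB W) ≤ 3 * (WE W).card + h.badN W := by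
  classical
  have hpt : ∀ e ∈ WE W, h.gA W e + h.gB W e ≤ 3 + (if h.badE W e then 1 else 0) := by
    intro e he
    by_cases hb : h.badE W e
    · rw [if_pos hb]
      have h1 : h.gA W e ≤ 2 := by rw [gA]; split <;> [omega; (split <;> omega)]
      have h2 : h.gB W e ≤ 2 := by rw [gB]; split <;> [omega; (split <;> omega)]
      omega
    · rw [if_neg hb]
      by_cases hA : h.gA W e = 2
      · have hrA : ¬ markedA a W (h.ro e) ∧ (h.rowE W (h.ro e)).card = 1 := by
          by_contra hcon
          rw [gA] at hA
          rcases Classical.em (markedA a W (h.ro e)) with h1 | h1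
          · rw [if_pos h1] at hA; omega
          · rcases Classical.em ((h.rowE W (h.ro e)).card = 1) with h2 | h2
            · exact hcon ⟨h1, h2⟩
            · rw [if_neg h1, if_neg h2] at hA; omega
        have hB : h.gB W e ≤ 1 := by
          by_contra hcon
          have hgB2 : h.gB W e = 2 := by
            have : h.gB W e ≤ 2 := by rw [gB]; split <;> [omega; (split <;> omega)]
            omega
          have hrB : ¬ markedB b W (h.co e) ∧ (h.colE W (h.co e)).card = 1 := by
            by_contra hcon2
            rw [gB] at hgB2
            rcases Classical.em (markedB b W (h.co e)) with h1 | h1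
            · rw [if_pos h1] at hgB2; omega
            · rcases Classical.em ((h.colE W (h.co e)).card = 1) with h2 | h2
              · exact hcon2 ⟨h1, h2⟩
              · rw [if_neg h1, if_neg h2] at hgB2; omega
          have hememrow : e ∈ h.rowE W (h.ro e) := by
            rw [rowE, Finset.mem_filter]; exact ⟨he, rfl⟩
          have hememcol : e ∈ h.colE W (h.co e) := by
            rw [colE, Finset.mem_filter]; exact ⟨he, rfl⟩
          exact hb ⟨hrA.1, hrB.1,
            Finset.eq_singleton_iff_unique_mem.2 ⟨hememrow, fun x hx =>
              Finset.card_le_one.1 (le_of_eq hrA.2) x hx e hememrow⟩,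
            Finset.eq_singleton_iff_unique_mem.2 ⟨hememcol, fun x hx =>
              Finset.card_le_one.1 (le_of_eq hrB.2) x hx e hememcol⟩⟩
        omega
      · have h1 : h.gA W e ≤ 2 := by rw [gA]; split <;> [omega; (split <;> omega)]
        have h2 : h.gB W e ≤ 2 := by rw [gB]; split <;> [omega; (split <;> omega)]
        omega
  have hsum : ∑ e ∈ WE W, (h.gA W e + h.gB W e) ≤
      ∑ e ∈ WE W, (3 + (if h.badE W e then 1 else 0)) := Finset.sum_le_sum hpt
  have hsplit : ∑ e ∈ WE W, (3 + (if h.badE W e then 1 else 0)) =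
      3 * (WE W).card + h.badN W := by
    rw [Finset.sum_add_distrib, Finset.sum_const, badN, Finset.card_filter]
    simp [mul_comm]
  calc 2 * (h.kA W + h.kB W) = 2 * h.kA W + 2 * h.kB W := by ring
  _ ≤ ∑ e ∈ WE W, h.gA W e + ∑ e ∈ WE W, h.gB W e :=
      Nat.add_le_add (h.charge_A W) (h.charge_B W)
  _ = ∑ e ∈ WE W, (h.gA W e + h.gB W e) := (Finset.sum_add_distrib).symm
  _ ≤ _ := hsum.trans (le_of_eq hsplit)

end CBS
end CB6

section CB7
variable {V : Type*} {m n : ℕ} {G : SimpleGraph V} {a : Fin m → V} {b : Fin n → V}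

namespace CBS

lemma a_mem_iff (h : CBS G a b) {i : Fin m} {g : G.edgeSet} : a i ∈ g.1 ↔ h.ro g = i := by
  rw [h.mem_iff]
  constructor
  · rintro (hh | hh)
    · exact (h.ha hh).symm
    · exact absurd hh (h.hab _ _)
  · rintro rfl; exact Or.inl rfl

lemma b_mem_iff (h : CBS G a b) {j : Fin n} {g : G.edgeSet} : b j ∈ g.1 ↔ h.co g = j := by
  rw [h.mem_iff]
  constructor
  · rintro (hh | hh)
    · exact absurd hh.symm (h.hab _ _)
    · exact (h.hb hh).symm
  · rintro rfl; exact Or.inr rfl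

lemma not_res (h : CBS G a b) (hm0 : 0 < m) (hn0 : 0 < n)
    {W : Finset (V ⊕ G.edgeSet)} (hW : IsResolving (BS G) ↑W)
    {x y : V ⊕ G.edgeSet} (hxy : x ≠ y)
    (hall : ∀ w ∈ W, h.D x w = h.D y w) : False := by
  obtain ⟨w, hw, hne⟩ := hW x y hxy
  rw [h.dist_eq hm0 hn0, h.dist_eq hm0 hn0] at hne
  exact hne (hall w hw)

lemma mem_WE {W : Finset (V ⊕ G.edgeSet)} {g : G.edgeSet} :
    g ∈ WE W ↔ Sum.inr g ∈ W := Finset.mem_toRight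

lemma row_singleton_iff (h : CBS G a b) {W : Finset (V ⊕ G.edgeSet)} {e g : G.edgeSet}
    {i : Fin m} (hr : h.rowE W i = {e}) (hg : g ∈ WE W) : h.ro g = i ↔ g = e := by
  constructor
  · intro hh
    have : g ∈ h.rowE W i := Finset.mem_filter.2 ⟨hg, hh⟩
    rwa [hr, Finset.mem_singleton] at this
  · rintro rfl
    have : g ∈ h.rowE W i := by rw [hr]; exact Finset.mem_singleton_self _
    exact (Finset.mem_filter.1 this).2

lemma col_singleton_iff (h : CBS G a b) {W : Finset (V ⊕ G.edgeSet)} {e g : G.edgeSet}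
    {j : Fin n} (hc : h.colE W j = {e}) (hg : g ∈ WE W) : h.co g = j ↔ g = e := by
  constructor
  · intro hh
    have : g ∈ h.colE W j := Finset.mem_filter.2 ⟨hg, hh⟩
    rwa [hc, Finset.mem_singleton] at this
  · rintro rfl
    have : g ∈ h.colE W j := by rw [hc]; exact Finset.mem_singleton_self _
    exact (Finset.mem_filter.1 this).2

lemma row_empty (h : CBS G a b) {W : Finset (V ⊕ G.edgeSet)} {g : G.edgeSet}
    {i : Fin m} (hr : h.rowE W i = ∅) (hg : g ∈ WE W) : h.ro g ≠ i := by
  intro hh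
  have : g ∈ h.rowE W i := Finset.mem_filter.2 ⟨hg, hh⟩
  rw [hr] at this
  exact absurd this (Finset.notMem_empty _)

lemma col_empty (h : CBS G a b) {W : Finset (V ⊕ G.edgeSet)} {g : G.edgeSet}
    {j : Fin n} (hc : h.colE W j = ∅) (hg : g ∈ WE W) : h.co g ≠ j := by
  intro hh
  have : g ∈ h.colE W j := Finset.mem_filter.2 ⟨hg, hh⟩
  rw [hc] at this
  exact absurd this (Finset.notMem_empty _)

lemma mkE_inj (h : CBS G a b) {i i' : Fin m} {j j' : Fin n}
    (hh : h.mkE i j = h.mkE i' j') : i = i' ∧ j = j' :=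
  h.coords_unique (congrArg Subtype.val hh)

/-- distance from a vertex with empty unmarked row to any landmark -/
lemma D_emptyRowA (h : CBS G a b) {W : Finset (V ⊕ G.edgeSet)} {i : Fin m}
    (hmk : ¬ markedA a W i) (hrow : h.rowE W i = ∅) {w : V ⊕ G.edgeSet} (hw : w ∈ W) :
    h.D (Sum.inl (a i)) w = (match w with
      | .inl v => if isA a v then 4 else 2
      | .inr _ => 3) := by
  rcases w with v | g
  · have hv : a i ≠ v := by rintro rfl; exact hmk hw
    simp only [D]
    rw [if_neg hv]
    exact if_congr (by simp [h.isA_a i]) rfl rfl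
  · have hg : g ∈ WE W := mem_WE.2 hw
    have : a i ∉ g.1 := fun hh => h.row_empty hrow hg (h.a_mem_iff.1 hh)
    simp only [D]
    rw [if_neg this]

lemma D_emptyColB (h : CBS G a b) {W : Finset (V ⊕ G.edgeSet)} {j : Fin n}
    (hmk : ¬ markedB b W j) (hcol : h.colE W j = ∅) {w : V ⊕ G.edgeSet} (hw : w ∈ W) :
    h.D (Sum.inl (b j)) w = (match w with
      | .inl v => if isA a v then 2 else 4
      | .inr _ => 3) := by
  rcases w with v | g
  · have hv : b j ≠ v := by rintro rfl; exact hmk hw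
    simp only [D]
    rw [if_neg hv]
    have hiff : (isA a (b j) ↔ isA a v) ↔ ¬ isA a v := by simp [h.not_isA_b j]
    by_cases hv2 : isA a v
    · rw [if_neg (by rw [hiff]; exact fun hh => hh hv2), if_pos hv2]
    · rw [if_pos (hiff.2 hv2), if_neg hv2]
  · have hg : g ∈ WE W := mem_WE.2 hw
    have : b j ∉ g.1 := fun hh => h.col_empty hcol hg (h.b_mem_iff.1 hh)
    simp only [D]
    rw [if_neg this]

lemma eA_le_one (h : CBS G a b) (hm0 : 0 < m) (hn0 : 0 < n)
    {W : Finset (V ⊕ G.edgeSet)} (hW : IsResolving (BS G) ↑W) : h.eA W ≤ 1 := by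
  rw [eA, Finset.card_le_one]
  intro i hi i' hi'
  rw [Finset.mem_filter] at hi hi'
  by_contra hne
  refine h.not_res hm0 hn0 hW (x := Sum.inl (a i)) (y := Sum.inl (a i'))
    (fun hh => hne (h.ha (Sum.inl_injective hh))) (fun w hw => ?_)
  rw [h.D_emptyRowA hi.2.1 hi.2.2 hw, h.D_emptyRowA hi'.2.1 hi'.2.2 hw]

lemma eB_le_one (h : CBS G a b) (hm0 : 0 < m) (hn0 : 0 < n)
    {W : Finset (V ⊕ G.edgeSet)} (hW : IsResolving (BS G) ↑W) : h.eB W ≤ 1 := by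
  rw [eB, Finset.card_le_one]
  intro j hj j' hj'
  rw [Finset.mem_filter] at hj hj'
  by_contra hne
  refine h.not_res hm0 hn0 hW (x := Sum.inl (b j)) (y := Sum.inl (b j'))
    (fun hh => hne (h.hb (Sum.inl_injective hh))) (fun w hw => ?_)
  rw [h.D_emptyColB hj.2.1 hj.2.2 hw, h.D_emptyColB hj'.2.1 hj'.2.2 hw]

lemma badN_le_one (h : CBS G a b) (hm0 : 0 < m) (hn0 : 0 < n)
    {W : Finset (V ⊕ G.edgeSet)} (hW : IsResolving (BS G) ↑W) : h.badN W ≤ 1 := by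
  rw [badN, Finset.card_le_one]
  intro e he f hf
  rw [Finset.mem_filter] at he hf
  unfold badE at he hf
  obtain ⟨heW, hA1, hB1, hr1, hc1⟩ := he
  obtain ⟨hfW, hA2, hB2, hr2, hc2⟩ := hf
  by_contra hne
  have hro : h.ro e ≠ h.ro f := by
    intro hh
    exact hne (((h.row_singleton_iff hr2 heW).1 hh).symm ▸ rfl)
  have hco : h.co e ≠ h.co f := by
    intro hh
    exact hne (((h.col_singleton_iff hc2 heW).1 hh).symm ▸ rfl)
  set x := h.mkE (h.ro e) (h.co f) with hx
  set y := h.mkE (h.ro f) (h.co e) with hy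
  have hxy : x ≠ y := fun hh => hro (h.mkE_inj hh).1
  refine h.not_res hm0 hn0 hW (x := Sum.inr x) (y := Sum.inr y)
    (fun hh => hxy (Sum.inr_injective hh)) (fun w hw => ?_)
  rcases w with v | g
  · -- vertex landmark: not an endpoint of either
    have hvx : v ∉ x.1 := by
      rw [hx, h.mem_mkE]
      rintro (rfl | rfl)
      · exact hA1 hw
      · exact hB2 hw
    have hvy : v ∉ y.1 := by
      rw [hy, h.mem_mkE]
      rintro (rfl | rfl)
      · exact hA2 hw
      · exact hB1 hw
    simp only [D]
    rw [if_neg hvx, if_neg hvy]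
  · have hg : g ∈ WE W := mem_WE.2 hw
    have hxg : x ≠ g := by
      intro hh
      have : h.ro g = h.ro e := by rw [← hh, hx, h.ro_mkE]
      have hge : g = e := (h.row_singleton_iff hr1 hg).1 this
      rw [hge] at hh
      exact hco (h.eq_mkE_iff.1 hh.symm).2
    have hyg : y ≠ g := by
      intro hh
      have : h.ro g = h.ro f := by rw [← hh, hy, h.ro_mkE]
      have hge : g = f := (h.row_singleton_iff hr2 hg).1 this
      rw [hge] at hh
      exact hco ((h.eq_mkE_iff.1 hh.symm).2).symm
    have hiffx : (h.ro x = h.ro g ∨ h.co x = h.co g) ↔ (g = e ∨ g = f) := by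
      rw [hx, h.ro_mkE, h.co_mkE, eq_comm (a := h.ro e), eq_comm (a := h.co f)]
      rw [h.row_singleton_iff hr1 hg, h.col_singleton_iff hc2 hg]
    have hiffy : (h.ro y = h.ro g ∨ h.co y = h.co g) ↔ (g = e ∨ g = f) := by
      rw [hy, h.ro_mkE, h.co_mkE, eq_comm (a := h.ro f), eq_comm (a := h.co e)]
      rw [h.row_singleton_iff hr2 hg, h.col_singleton_iff hc1 hg, or_comm]
    simp only [D]
    rw [if_neg hxg, if_neg hyg]
    exact if_congr (hiffx.trans hiffy.symm) rfl rfl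
  
lemma bad_empty_empty (h : CBS G a b) (hm0 : 0 < m) (hn0 : 0 < n)
    {W : Finset (V ⊕ G.edgeSet)} (hW : IsResolving (BS G) ↑W)
    (hbad : 0 < h.badN W) (hiA : 0 < h.eA W) (hiB : 0 < h.eB W) : False := by
  obtain ⟨e, he⟩ := Finset.card_pos.1 hbad
  obtain ⟨i0, hi0⟩ := Finset.card_pos.1 hiA
  obtain ⟨j0, hj0⟩ := Finset.card_pos.1 hiB
  rw [Finset.mem_filter] at he hi0 hj0
  unfold badE at he
  obtain ⟨heW, hA1, hB1, hr1, hc1⟩ := he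
  obtain ⟨hmkA, hrow0⟩ := hi0.2
  obtain ⟨hmkB, hcol0⟩ := hj0.2
  have hroi : h.ro e ≠ i0 := h.row_empty hrow0 heW
  have hcoj : h.co e ≠ j0 := h.col_empty hcol0 heW
  set x := h.mkE (h.ro e) j0 with hx
  set y := h.mkE i0 (h.co e) with hy
  have hxy : x ≠ y := fun hh => hroi (h.mkE_inj hh).1
  refine h.not_res hm0 hn0 hW (x := Sum.inr x) (y := Sum.inr y)
    (fun hh => hxy (Sum.inr_injective hh)) (fun w hw => ?_)
  rcases w with v | g
  · have hvx : v ∉ x.1 := by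
      rw [hx, h.mem_mkE]
      rintro (rfl | rfl)
      · exact hA1 hw
      · exact hmkB hw
    have hvy : v ∉ y.1 := by
      rw [hy, h.mem_mkE]
      rintro (rfl | rfl)
      · exact hmkA hw
      · exact hB1 hw
    simp only [D]
    rw [if_neg hvx, if_neg hvy]
  · have hg : g ∈ WE W := mem_WE.2 hw
    have hxg : x ≠ g := by
      intro hh
      exact h.col_empty hcol0 hg (by rw [← hh, hx, h.co_mkE])
    have hyg : y ≠ g := by
      intro hh
      exact h.row_empty hrow0 hg (by rw [← hh, hy, h.ro_mkE])
    have hiffx : (h.ro x = h.ro g ∨ h.co x = h.co g) ↔ g = e := by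
      rw [hx, h.ro_mkE, h.co_mkE, eq_comm (a := h.ro e), eq_comm (a := j0)]
      rw [h.row_singleton_iff hr1 hg]
      simp [h.col_empty hcol0 hg]
    have hiffy : (h.ro y = h.ro g ∨ h.co y = h.co g) ↔ g = e := by
      rw [hy, h.ro_mkE, h.co_mkE, eq_comm (a := i0), eq_comm (a := h.co e)]
      rw [h.col_singleton_iff hc1 hg]
      simp [h.row_empty hrow0 hg]
    simp only [D]
    rw [if_neg hxg, if_neg hyg]
    exact if_congr (hiffx.trans hiffy.symm) rfl rfl

end CBS
end CB7

section CB8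
variable {V : Type*} {m n : ℕ} {G : SimpleGraph V} {a : Fin m → V} {b : Fin n → V}

namespace CBS

lemma card_lower (h : CBS G a b) (hm : 2 ≤ m) (hn : n = 2 * m - 2)
    {W : Finset (V ⊕ G.edgeSet)} (hW : IsResolving (BS G) ↑W) : n ≤ W.card := by
  have hm0 : 0 < m := by omega
  have hn0 : 0 < n := by omega
  have f1 := h.F1 W
  have f2 := h.F2 W
  have f3 := h.F3 W
  have fc := h.charge_total W
  have g1 := h.eA_le_one hm0 hn0 hW
  have g2 := h.eB_le_one hm0 hn0 hW
  have g3 := h.badN_le_one hm0 hn0 hW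
  have hbee : h.badN W = 0 ∨ h.eA W = 0 ∨ h.eB W = 0 := by
    by_contra hc
    push_neg at hc
    exact h.bad_empty_empty hm0 hn0 hW (Nat.pos_of_ne_zero hc.1)
      (Nat.pos_of_ne_zero hc.2.1) (Nat.pos_of_ne_zero hc.2.2)
  have hcard : W.toLeft.card + (WE W).card = W.card :=
    Finset.card_toLeft_add_card_toRight
  omega

theorem metricDim_BS (h : CBS G a b) (hm : 2 ≤ m) (hn : n = 2 * m - 2) :
    metricDim (BS G) = n := by
  have hmem : n ∈ {k | ∃ W : Finset (V ⊕ G.edgeSet), IsResolving (BS G) ↑W ∧ W.card = k} :=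
    ⟨h.WU hm hn, h.WU_resolving hm hn, h.card_WU hm hn⟩
  refine le_antisymm (Nat.sInf_le hmem) (le_csInf ⟨n, hmem⟩ ?_)
  rintro k ⟨W, hW, rfl⟩
  exact h.card_lower hm hn hW

end CBS
end CB8

section ZD

lemma cast_eq_cast_iff' {N x y : ℕ} [NeZero N] (hx : x < N) (hy : y < N) :
    ((x : ZMod N) = (y : ZMod N)) ↔ x = y := by
  constructor
  · intro hh
    have := congrArg ZMod.val hh
    rwa [ZMod.val_natCast_of_lt hx, ZMod.val_natCast_of_lt hy] at this
  · rintro rfl; rfl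

lemma cast_ne_zero' {N x : ℕ} [NeZero N] (h0 : 0 < x) (hx : x < N) : (x : ZMod N) ≠ 0 := by
  intro hh
  rw [ZMod.natCast_eq_zero_iff] at hh
  exact absurd (Nat.le_of_dvd h0 hh) (by omega)

lemma zd_CBS (p q : ℕ) (hp : p.Prime) (hq : q.Prime) (hpq : p ≠ q) :
    ∃ (a : Fin (p - 1) → ZDVert (p * q)) (b : Fin (q - 1) → ZDVert (p * q)),
      CBS (zdGraph (p * q)) a b := by
  have hp2 : 2 ≤ p := hp.two_le
  have hq2 : 2 ≤ q := hq.two_le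
  haveI : NeZero (p * q) := ⟨by positivity⟩
  -- the two vertex families
  have haprop : ∀ i : Fin (p - 1), ((q * (i.1 + 1) : ℕ) : ZMod (p * q)) ≠ 0 ∧
      ∃ w : ZMod (p * q), w ≠ 0 ∧ ((q * (i.1 + 1) : ℕ) : ZMod (p * q)) * w = 0 := by
    intro i
    have hi := i.2
    have hlt : q * (i.1 + 1) < p * q :=
      (mul_lt_mul_of_pos_left (show i.1 + 1 < p by omega) (show 0 < q by omega)).trans_eq
        (mul_comm q p)
    refine ⟨cast_ne_zero' (by positivity) hlt, (p : ZMod (p * q)),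
      cast_ne_zero' (by omega)
        (by simpa using mul_lt_mul_of_pos_left (show 1 < q by omega) (show 0 < p by omega)), ?_⟩
    rw [← Nat.cast_mul, ZMod.natCast_eq_zero_iff]
    exact ⟨(i.1 + 1), by ring⟩
  have hbprop : ∀ j : Fin (q - 1), ((p * (j.1 + 1) : ℕ) : ZMod (p * q)) ≠ 0 ∧
      ∃ w : ZMod (p * q), w ≠ 0 ∧ ((p * (j.1 + 1) : ℕ) : ZMod (p * q)) * w = 0 := by
    intro j
    have hj := j.2
    have hlt : p * (j.1 + 1) < p * q :=
      mul_lt_mul_of_pos_left (show j.1 + 1 < q by omega) (show 0 < p by omega)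
    refine ⟨cast_ne_zero' (by positivity) hlt, (q : ZMod (p * q)),
      cast_ne_zero' (by omega)
        (by simpa using mul_lt_mul_of_pos_right (show 1 < p by omega) (show 0 < q by omega)), ?_⟩
    rw [← Nat.cast_mul, ZMod.natCast_eq_zero_iff]
    exact ⟨(j.1 + 1), by ring⟩
  refine ⟨fun i => ⟨((q * (i.1 + 1) : ℕ) : ZMod (p * q)), haprop i⟩,
    fun j => ⟨((p * (j.1 + 1) : ℕ) : ZMod (p * q)), hbprop j⟩, ?_, ?_, ?_, ?_, ?_, ?_, ?_⟩
  · -- injective a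
    intro i i' hii
    have hlt : ∀ k : Fin (p - 1), q * (k.1 + 1) < p * q := fun k =>
      (mul_lt_mul_of_pos_left (show k.1 + 1 < p by have := k.2; omega)
        (show 0 < q by omega)).trans_eq (mul_comm q p)
    have h5 := (cast_eq_cast_iff' (hlt i) (hlt i')).1 (congrArg Subtype.val hii)
    have h6 := Nat.eq_of_mul_eq_mul_left (show 0 < q by omega) h5
    exact Fin.ext (by omega)
  · -- injective b
    intro j j' hjj
    have hlt : ∀ k : Fin (q - 1), p * (k.1 + 1) < p * q := fun k =>
      mul_lt_mul_of_pos_left (show k.1 + 1 < q by have := k.2; omega) (show 0 < p by omega)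
    have h5 := (cast_eq_cast_iff' (hlt j) (hlt j')).1 (congrArg Subtype.val hjj)
    have h6 := Nat.eq_of_mul_eq_mul_left (show 0 < p by omega) h5
    exact Fin.ext (by omega)
  · -- a i ≠ b j
    intro i j hij
    have hi := i.2
    have hj := j.2
    have h1 : q * (i.1 + 1) = p * (j.1 + 1) :=
      (cast_eq_cast_iff'
        ((mul_lt_mul_of_pos_left (show i.1 + 1 < p by omega)
          (show 0 < q by omega)).trans_eq (mul_comm q p))
        (mul_lt_mul_of_pos_left (show j.1 + 1 < q by omega) (show 0 < p by omega))).1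
        (congrArg Subtype.val hij)
    have hdvd : q ∣ p * (j.1 + 1) := ⟨i.1 + 1, h1.symm⟩
    rcases (Nat.Prime.dvd_mul hq).1 hdvd with hd | hd
    · exact hpq ((Nat.prime_dvd_prime_iff_eq hq hp).1 hd).symm
    · have := Nat.le_of_dvd (by omega) hd
      omega
  · -- cover
    intro v
    obtain ⟨x, hx0, w, hw0, hxw⟩ := v
    have hdvd : p ∣ x.val ∨ q ∣ x.val := by
      by_contra hc
      push_neg at hc
      have hcop : Nat.Coprime x.val (p * q) :=
        Nat.Coprime.mul_right
          (Nat.coprime_comm.1 ((Nat.Prime.coprime_iff_not_dvd hp).2 hc.1))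
          (Nat.coprime_comm.1 ((Nat.Prime.coprime_iff_not_dvd hq).2 hc.2))
      have hunit : IsUnit x := by
        rw [← ZMod.natCast_zmod_val x]
        exact (ZMod.isUnit_iff_coprime _ _).2 hcop
      exact hw0 (by rwa [IsUnit.mul_right_eq_zero hunit] at hxw)
    have hxval0 : x.val ≠ 0 := fun hh => hx0 ((ZMod.val_eq_zero x).1 hh)
    have hxvlt : x.val < p * q := ZMod.val_lt x
    rcases hdvd with ⟨t, ht⟩ | ⟨t, ht⟩
    · -- p ∣ val : b side
      right
      have ht1 : 1 ≤ t := by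
        rcases Nat.eq_zero_or_pos t with rfl | hh
        · omega
        · exact hh
      have htq : t < q := by nlinarith
      refine ⟨⟨t - 1, by omega⟩, ?_⟩
      apply Subtype.ext
      show x = ((p * ((t - 1) + 1) : ℕ) : ZMod (p * q))
      have : p * ((t - 1) + 1) = x.val := by rw [ht]; congr 1; omega
      rw [this, ZMod.natCast_zmod_val]
    · -- q ∣ val : a side
      left
      have ht1 : 1 ≤ t := by
        rcases Nat.eq_zero_or_pos t with rfl | hh
        · omega
        · exact hh
      have htp : t < p := by nlinarith
      refine ⟨⟨t - 1, by omega⟩, ?_⟩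
      apply Subtype.ext
      show x = ((q * ((t - 1) + 1) : ℕ) : ZMod (p * q))
      have : q * ((t - 1) + 1) = x.val := by rw [ht]; congr 1; omega
      rw [this, ZMod.natCast_zmod_val]
  · -- adjacency a-b
    intro i j
    refine ⟨?_, ?_⟩
    · -- distinctness (same as hab above)
      intro hij
      have hi := i.2
      have hj := j.2
      have h1 : q * (i.1 + 1) = p * (j.1 + 1) :=
        (cast_eq_cast_iff'
          ((mul_lt_mul_of_pos_left (show i.1 + 1 < p by omega)
            (show 0 < q by omega)).trans_eq (mul_comm q p))
          (mul_lt_mul_of_pos_left (show j.1 + 1 < q by omega) (show 0 < p by omega))).1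
          (congrArg Subtype.val hij)
      have hdvd : q ∣ p * (j.1 + 1) := ⟨i.1 + 1, h1.symm⟩
      rcases (Nat.Prime.dvd_mul hq).1 hdvd with hd | hd
      · exact hpq ((Nat.prime_dvd_prime_iff_eq hq hp).1 hd).symm
      · have := Nat.le_of_dvd (by omega) hd
        omega
    · show ((q * (i.1 + 1) : ℕ) : ZMod (p * q)) * ((p * (j.1 + 1) : ℕ) : ZMod (p * q)) = 0
      rw [← Nat.cast_mul, ZMod.natCast_eq_zero_iff]
      exact ⟨(i.1 + 1) * (j.1 + 1), by ring⟩
  · -- no a-a adjacency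
    intro i i' hadj
    obtain ⟨-, hprod⟩ := hadj
    have hi := i.2
    have hi' := i'.2
    rw [show ((q * (i.1 + 1) : ℕ) : ZMod (p * q)) * ((q * (i'.1 + 1) : ℕ) : ZMod (p * q))
        = ((q * (i.1 + 1) * (q * (i'.1 + 1)) : ℕ) : ZMod (p * q)) from (Nat.cast_mul _ _).symm,
      ZMod.natCast_eq_zero_iff] at hprod
    -- p*q ∣ q*(i+1)*q*(i'+1)  →  p ∣ q*(i+1)*(i'+1) → contradiction
    have hpd : p ∣ q * ((i.1 + 1) * (i'.1 + 1)) := by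
      obtain ⟨k, hk⟩ := hprod
      refine ⟨k, ?_⟩
      have hq0 : 0 < q := by omega
      have : q * (q * ((i.1 + 1) * (i'.1 + 1))) = q * (p * k) := by
        rw [show q * (q * ((i.1 + 1) * (i'.1 + 1)))
          = q * (i.1 + 1) * (q * (i'.1 + 1)) from by ring, hk]; ring
      exact Nat.eq_of_mul_eq_mul_left hq0 this
    rcases (Nat.Prime.dvd_mul hp).1 hpd with hd | hd
    · exact hpq ((Nat.prime_dvd_prime_iff_eq hp hq).1 hd)
    · rcases (Nat.Prime.dvd_mul hp).1 hd with hd2 | hd2 <;>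
        · have := Nat.le_of_dvd (by omega) hd2
          omega
  · -- no b-b adjacency
    intro j j' hadj
    obtain ⟨-, hprod⟩ := hadj
    have hj := j.2
    have hj' := j'.2
    rw [show ((p * (j.1 + 1) : ℕ) : ZMod (p * q)) * ((p * (j'.1 + 1) : ℕ) : ZMod (p * q))
        = ((p * (j.1 + 1) * (p * (j'.1 + 1)) : ℕ) : ZMod (p * q)) from (Nat.cast_mul _ _).symm,
      ZMod.natCast_eq_zero_iff] at hprod
    have hqd : q ∣ p * ((j.1 + 1) * (j'.1 + 1)) := by
      obtain ⟨k, hk⟩ := hprod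
      refine ⟨k, ?_⟩
      have hp0 : 0 < p := by omega
      have : p * (p * ((j.1 + 1) * (j'.1 + 1))) = p * (q * k) := by
        rw [show p * (p * ((j.1 + 1) * (j'.1 + 1)))
          = p * (j.1 + 1) * (p * (j'.1 + 1)) from by ring, hk]; ring
      exact Nat.eq_of_mul_eq_mul_left hp0 this
    rcases (Nat.Prime.dvd_mul hq).1 hqd with hd | hd
    · exact hpq ((Nat.prime_dvd_prime_iff_eq hq hp).1 hd).symm
    · rcases (Nat.Prime.dvd_mul hq).1 hd with hd2 | hd2 <;>
        · have := Nat.le_of_dvd (by omega) hd2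
          omega

end ZD


theorem stmt5 (p q : ℕ) (hp : p.Prime) (hq : q.Prime) (hop : Odd p) (hoq : Odd q)
    (hpq : p ≠ q) (hp5 : 5 ≤ p) (hqp : p < q) (hq2p : q = 2 * p - 3) :
    metricDim (BS (zdGraph (p * q))) = q - 1 := by
  obtain ⟨a, b, h⟩ := zd_CBS p q hp hq hpq
  exact h.metricDim_BS (by omega) (by omega)
end

section
/- Let p and q be distinct odd primes with p ≥ 5, q > p and q = 2p - 3, and let n = pq. Then the independent metric dimension of the barycentric subdivision of the zero divisor graph of Z_n equals q - 1, i.e. idim(BS(Γ(Z_{pq}))) = q - 1. -/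
open SimpleGraph

section BSbasic
variable {V : Type*} {G : SimpleGraph V}

@[simp] lemma BS_adj_inl_inr {v : V} {e : G.edgeSet} :
    (BS G).Adj (Sum.inl v) (Sum.inr e) ↔ v ∈ e.1 := by
  constructor
  · rintro (⟨w, f, hw, hf, hm⟩ | ⟨w, f, hw, hf, hm⟩)
    · rw [Sum.inl.injEq] at hw; rw [Sum.inr.injEq] at hf; subst hw; subst hf; exact hm
    · exact absurd hw (by simp)
  · intro hv; exact Or.inl ⟨v, e, rfl, rfl, hv⟩

@[simp] lemma BS_adj_inr_inl {v : V} {e : G.edgeSet} :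
    (BS G).Adj (Sum.inr e) (Sum.inl v) ↔ v ∈ e.1 := by
  rw [adj_comm]; exact BS_adj_inl_inr

@[simp] lemma BS_adj_inl_inl {v w : V} :
    ¬ (BS G).Adj (Sum.inl v) (Sum.inl w) := by
  rintro (⟨a, f, h1, h2, -⟩ | ⟨a, f, h1, h2, -⟩) <;> simp_all

@[simp] lemma BS_adj_inr_inr {e f : G.edgeSet} :
    ¬ (BS G).Adj (Sum.inr e) (Sum.inr f) := by
  rintro (⟨a, g, h1, h2, -⟩ | ⟨a, g, h1, h2, -⟩) <;> simp_all

lemma BS_adj_flip {x y : V ⊕ G.edgeSet} (h : (BS G).Adj x y) :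
    y.isLeft = !x.isLeft := by
  rcases h with ⟨v, e, rfl, rfl, -⟩ | ⟨v, e, rfl, rfl, -⟩ <;> rfl

lemma BS_walk_parity {x y : V ⊕ G.edgeSet} (w : (BS G).Walk x y) :
    w.length % 2 = (if x.isLeft = y.isLeft then 0 else 1) := by
  induction w with
  | nil => simp
  | @cons a b c hadj p ih =>
    have hb := BS_adj_flip hadj
    rw [Walk.length_cons]
    rcases ha : a.isLeft with _ | _ <;> rcases hc : c.isLeft with _ | _ <;>
      rw [ha] at hb <;> simp only [hb, ha, hc, Bool.not_false, Bool.not_true,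
        if_true, if_false, reduceIte, Bool.true_eq_false, Bool.false_eq_true] at ih ⊢ <;>
      omega

lemma BS_dist_parity {x y : V ⊕ G.edgeSet} (h : (BS G).Reachable x y) :
    (BS G).dist x y % 2 = (if x.isLeft = y.isLeft then 0 else 1) := by
  obtain ⟨w, hw⟩ := h.exists_walk_length_eq_dist
  rw [← hw]; exact BS_walk_parity w

lemma exists_mid_of_dist_two {W : Type*} {H : SimpleGraph W} {x y : W}
    (h : H.dist x y = 2) : ∃ z, H.Adj x z ∧ H.Adj z y := by
  have hne : H.dist x y ≠ 0 := by rw [h]; norm_num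
  obtain ⟨w, hw⟩ := exists_walk_of_dist_ne_zero hne
  rw [h] at hw
  cases w with
  | nil => simp at hw
  | @cons _ b _ h1 p =>
    cases p with
    | nil => simp at hw
    | @cons _ c _ h2 p2 =>
      cases p2 with
      | nil => exact ⟨_, h1, h2⟩
      | cons h3 p3 => simp [Walk.length_cons] at hw
end BSbasic

/-- complete bipartite structure on a graph -/
structure CB {V : Type*} (G : SimpleGraph V) (A B : Finset V) : Prop where
  disj : ∀ v, v ∈ A → v ∈ B → False
  cover : ∀ v : V, v ∈ A ∨ v ∈ B
  adj_iff : ∀ x y, G.Adj x y ↔ (x ∈ A ∧ y ∈ B) ∨ (x ∈ B ∧ y ∈ A)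

namespace CB
variable {V : Type*} {G : SimpleGraph V} {A B : Finset V}

lemma symm (h : CB G A B) : CB G B A where
  disj := fun v hb ha => h.disj v ha hb
  cover := fun v => (h.cover v).symm
  adj_iff := fun x y => by rw [h.adj_iff]; tauto

lemma ne_of_mem (h : CB G A B) {a b : V} (ha : a ∈ A) (hb : b ∈ B) : a ≠ b :=
  fun e => h.disj a ha (e ▸ hb)

lemma edge_mem (h : CB G A B) {a b : V} (ha : a ∈ A) (hb : b ∈ B) :
    s(a, b) ∈ G.edgeSet := by
  rw [mem_edgeSet, h.adj_iff]; exact Or.inl ⟨ha, hb⟩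

/-- the edge of `G` joining `a ∈ A` and `b ∈ B`, as an element of the edge set -/
def E (h : CB G A B) {a b : V} (ha : a ∈ A) (hb : b ∈ B) : G.edgeSet :=
  ⟨s(a, b), h.edge_mem ha hb⟩

lemma exists_ends (h : CB G A B) (e : G.edgeSet) :
    ∃ a b, a ∈ A ∧ b ∈ B ∧ e.1 = s(a, b) := by
  obtain ⟨e, he⟩ := e
  induction e with
  | _ x y =>
    rw [mem_edgeSet] at he
    rcases (h.adj_iff x y).1 he with ⟨hx, hy⟩ | ⟨hx, hy⟩
    · exact ⟨x, y, hx, hy, rfl⟩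
    · exact ⟨y, x, hy, hx, Sym2.eq_swap⟩

noncomputable def endA (h : CB G A B) (e : G.edgeSet) : V := (h.exists_ends e).choose

noncomputable def endB (h : CB G A B) (e : G.edgeSet) : V :=
  (h.exists_ends e).choose_spec.choose

lemma endA_mem (h : CB G A B) (e : G.edgeSet) : h.endA e ∈ A :=
  (h.exists_ends e).choose_spec.choose_spec.1

lemma endB_mem (h : CB G A B) (e : G.edgeSet) : h.endB e ∈ B :=
  (h.exists_ends e).choose_spec.choose_spec.2.1

lemma ends_eq (h : CB G A B) (e : G.edgeSet) : e.1 = s(h.endA e, h.endB e) :=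
  (h.exists_ends e).choose_spec.choose_spec.2.2

lemma mem_edge_iff (h : CB G A B) {v : V} {e : G.edgeSet} :
    v ∈ e.1 ↔ v = h.endA e ∨ v = h.endB e := by
  rw [h.ends_eq e]; exact Sym2.mem_iff

lemma ends_unique (h : CB G A B) {a b : V} {e : G.edgeSet} (ha : a ∈ A) (hb : b ∈ B)
    (he : e.1 = s(a, b)) : h.endA e = a ∧ h.endB e = b := by
  have h2 := (h.ends_eq e).symm.trans he
  rw [Sym2.eq_iff] at h2
  rcases h2 with ⟨h3, h4⟩ | ⟨h3, h4⟩
  · exact ⟨h3, h4⟩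
  · exact absurd h3 (h.ne_of_mem (h.endA_mem e) hb)

lemma endA_E (h : CB G A B) {a b : V} (ha : a ∈ A) (hb : b ∈ B) :
    h.endA (h.E ha hb) = a := (h.ends_unique ha hb rfl).1

lemma endB_E (h : CB G A B) {a b : V} (ha : a ∈ A) (hb : b ∈ B) :
    h.endB (h.E ha hb) = b := (h.ends_unique ha hb rfl).2

end CB

section dists
variable {V : Type*} {G : SimpleGraph V} {A B : Finset V}

lemma BS_dist_one {v : V} {e : G.edgeSet} (hv : v ∈ e.1) :
    (BS G).dist (Sum.inl v) (Sum.inr e) = 1 :=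
  dist_eq_one_iff_adj.2 (BS_adj_inl_inr.2 hv)

namespace CB

lemma dist_three (h : CB G A B) {v : V} {e : G.edgeSet} (hv : v ∉ e.1) :
    (BS G).dist (Sum.inl v) (Sum.inr e) = 3 := by
  have key : ∃ w : (BS G).Walk (Sum.inl v) (Sum.inr e), w.length = 3 := by
    rcases h.cover v with hvA | hvB
    · have h1 : (BS G).Adj (Sum.inl v) (Sum.inr (h.E hvA (h.endB_mem e))) :=
        BS_adj_inl_inr.2 (by simp [CB.E])
      have h2 : (BS G).Adj (Sum.inr (h.E hvA (h.endB_mem e))) (Sum.inl (h.endB e)) :=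
        BS_adj_inr_inl.2 (by simp [CB.E])
      have h3 : (BS G).Adj (Sum.inl (h.endB e)) (Sum.inr e) :=
        BS_adj_inl_inr.2 (by rw [h.mem_edge_iff]; right; rfl)
      exact ⟨Walk.cons h1 (Walk.cons h2 (Walk.cons h3 Walk.nil)), rfl⟩
    · have h1 : (BS G).Adj (Sum.inl v) (Sum.inr (h.E (h.endA_mem e) hvB)) :=
        BS_adj_inl_inr.2 (by simp [CB.E])
      have h2 : (BS G).Adj (Sum.inr (h.E (h.endA_mem e) hvB)) (Sum.inl (h.endA e)) :=
        BS_adj_inr_inl.2 (by simp [CB.E])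
      have h3 : (BS G).Adj (Sum.inl (h.endA e)) (Sum.inr e) :=
        BS_adj_inl_inr.2 (by rw [h.mem_edge_iff]; left; rfl)
      exact ⟨Walk.cons h1 (Walk.cons h2 (Walk.cons h3 Walk.nil)), rfl⟩
  obtain ⟨w, hwl⟩ := key
  have hle : (BS G).dist (Sum.inl v) (Sum.inr e) ≤ 3 := hwl ▸ dist_le w
  have hpar := BS_dist_parity ⟨w⟩
  simp only [Sum.isLeft_inl, Sum.isLeft_inr, Bool.true_eq_false, if_false, reduceIte] at hpar
  have hne1 : (BS G).dist (Sum.inl v) (Sum.inr e) ≠ 1 :=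
    fun h1 => hv (BS_adj_inl_inr.1 (dist_eq_one_iff_adj.1 h1))
  omega

lemma dist_cross (h : CB G A B) {a b : V} (ha : a ∈ A) (hb : b ∈ B) :
    (BS G).dist (Sum.inl a) (Sum.inl b) = 2 := by
  have h1 : (BS G).Adj (Sum.inl a) (Sum.inr (h.E ha hb)) :=
    BS_adj_inl_inr.2 (by simp [CB.E])
  have h2 : (BS G).Adj (Sum.inr (h.E ha hb)) (Sum.inl b) :=
    BS_adj_inr_inl.2 (by simp [CB.E])
  let w : (BS G).Walk (Sum.inl a) (Sum.inl b) := Walk.cons h1 (Walk.cons h2 Walk.nil)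
  have hle : (BS G).dist (Sum.inl a) (Sum.inl b) ≤ 2 := by
    have := dist_le w; simpa [w] using this
  have hpar := BS_dist_parity (⟨w⟩ : (BS G).Reachable _ _)
  simp only [Sum.isLeft_inl, if_true, reduceIte] at hpar
  have hne : Sum.inl a ≠ (Sum.inl b : V ⊕ G.edgeSet) := by
    simp [h.ne_of_mem ha hb]
  have hpos := Reachable.pos_dist_of_ne ⟨w⟩ hne
  omega

lemma dist_AA (h : CB G A B) {a a' : V} (ha : a ∈ A) (ha' : a' ∈ A) (hne : a ≠ a')
    (hB : B.Nonempty) : (BS G).dist (Sum.inl a) (Sum.inl a') = 4 := by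
  obtain ⟨b, hb⟩ := hB
  have h1 : (BS G).Adj (Sum.inl a) (Sum.inr (h.E ha hb)) :=
    BS_adj_inl_inr.2 (by simp [CB.E])
  have h2 : (BS G).Adj (Sum.inr (h.E ha hb)) (Sum.inl b) :=
    BS_adj_inr_inl.2 (by simp [CB.E])
  have h3 : (BS G).Adj (Sum.inl b) (Sum.inr (h.E ha' hb)) :=
    BS_adj_inl_inr.2 (by simp [CB.E])
  have h4 : (BS G).Adj (Sum.inr (h.E ha' hb)) (Sum.inl a') :=
    BS_adj_inr_inl.2 (by simp [CB.E])
  let w : (BS G).Walk (Sum.inl a) (Sum.inl a') :=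
    Walk.cons h1 (Walk.cons h2 (Walk.cons h3 (Walk.cons h4 Walk.nil)))
  have hle : (BS G).dist (Sum.inl a) (Sum.inl a') ≤ 4 := by
    have := dist_le w; simpa [w] using this
  have hpar := BS_dist_parity (⟨w⟩ : (BS G).Reachable _ _)
  simp only [Sum.isLeft_inl, if_true, reduceIte] at hpar
  have hne' : Sum.inl a ≠ (Sum.inl a' : V ⊕ G.edgeSet) := by simp [hne]
  have hpos := Reachable.pos_dist_of_ne ⟨w⟩ hne'
  have hne2 : (BS G).dist (Sum.inl a) (Sum.inl a') ≠ 2 := by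
    intro h2d
    obtain ⟨z, hz1, hz2⟩ := exists_mid_of_dist_two h2d
    cases z with
    | inl w => exact BS_adj_inl_inl hz1
    | inr f =>
      have hm1 := BS_adj_inl_inr.1 hz1
      have hm2 := BS_adj_inr_inl.1 hz2
      rw [h.mem_edge_iff] at hm1 hm2
      rcases hm1 with h5 | hbad
      · rcases hm2 with h6 | hbad'
        · exact hne (h5.trans h6.symm)
        · exact h.disj a' ha' (by rw [hbad']; exact h.endB_mem f)
      · exact h.disj a ha (by rw [hbad]; exact h.endB_mem f)
  omega

lemma dist_BB (h : CB G A B) {b b' : V} (hb : b ∈ B) (hb' : b' ∈ B) (hne : b ≠ b')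
    (hA : A.Nonempty) : (BS G).dist (Sum.inl b) (Sum.inl b') = 4 :=
  h.symm.dist_AA hb hb' hne hA

lemma dist_EE_two {e f : G.edgeSet} {v : V} (hef : e ≠ f) (hv : v ∈ e.1)
    (hv' : v ∈ f.1) : (BS G).dist (Sum.inr e) (Sum.inr f) = 2 := by
  have h1 : (BS G).Adj (Sum.inr e) (Sum.inl v) := BS_adj_inr_inl.2 hv
  have h2 : (BS G).Adj (Sum.inl v) (Sum.inr f) := BS_adj_inl_inr.2 hv'
  let w : (BS G).Walk (Sum.inr e) (Sum.inr f) := Walk.cons h1 (Walk.cons h2 Walk.nil)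
  have hle : (BS G).dist (Sum.inr e) (Sum.inr f) ≤ 2 := by
    have := dist_le w; simpa [w] using this
  have hpar := BS_dist_parity (⟨w⟩ : (BS G).Reachable _ _)
  simp only [Sum.isLeft_inr, if_true, reduceIte] at hpar
  have hne' : Sum.inr e ≠ (Sum.inr f : V ⊕ G.edgeSet) := by simp [hef]
  have hpos := Reachable.pos_dist_of_ne ⟨w⟩ hne'
  omega

lemma dist_EE_four (h : CB G A B) {e f : G.edgeSet}
    (hdisj : ∀ v, v ∈ e.1 → v ∈ f.1 → False) :
    (BS G).dist (Sum.inr e) (Sum.inr f) = 4 := by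
  have hae : h.endA e ∈ e.1 := by rw [h.mem_edge_iff]; left; rfl
  have hbf : h.endB f ∈ f.1 := by rw [h.mem_edge_iff]; right; rfl
  have h1 : (BS G).Adj (Sum.inr e) (Sum.inl (h.endA e)) := BS_adj_inr_inl.2 hae
  have h2 : (BS G).Adj (Sum.inl (h.endA e)) (Sum.inr (h.E (h.endA_mem e) (h.endB_mem f))) :=
    BS_adj_inl_inr.2 (by simp [CB.E])
  have h3 : (BS G).Adj (Sum.inr (h.E (h.endA_mem e) (h.endB_mem f))) (Sum.inl (h.endB f)) :=
    BS_adj_inr_inl.2 (by simp [CB.E])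
  have h4 : (BS G).Adj (Sum.inl (h.endB f)) (Sum.inr f) := BS_adj_inl_inr.2 hbf
  let w : (BS G).Walk (Sum.inr e) (Sum.inr f) :=
    Walk.cons h1 (Walk.cons h2 (Walk.cons h3 (Walk.cons h4 Walk.nil)))
  have hle : (BS G).dist (Sum.inr e) (Sum.inr f) ≤ 4 := by
    have := dist_le w; simpa [w] using this
  have hpar := BS_dist_parity (⟨w⟩ : (BS G).Reachable _ _)
  simp only [Sum.isLeft_inr, if_true, reduceIte] at hpar
  have hnef : e ≠ f := fun hef => hdisj (h.endA e) hae (hef ▸ hae)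
  have hne' : Sum.inr e ≠ (Sum.inr f : V ⊕ G.edgeSet) := by simp [hnef]
  have hpos := Reachable.pos_dist_of_ne ⟨w⟩ hne'
  have hne2 : (BS G).dist (Sum.inr e) (Sum.inr f) ≠ 2 := by
    intro h2d
    obtain ⟨z, hz1, hz2⟩ := exists_mid_of_dist_two h2d
    cases z with
    | inr g => exact BS_adj_inr_inr hz1
    | inl v => exact hdisj v (BS_adj_inr_inl.1 hz1) (BS_adj_inl_inr.1 hz2)
  omega

end CB
end dists

namespace CB
variable {V : Type*} {G : SimpleGraph V} {A B : Finset V}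

lemma dist_vals_lr (h : CB G A B) (v : V) (e : G.edgeSet) :
    (BS G).dist (Sum.inl v) (Sum.inr e) = 1 ∨ (BS G).dist (Sum.inl v) (Sum.inr e) = 3 := by
  by_cases hv : v ∈ e.1
  · exact Or.inl (BS_dist_one hv)
  · exact Or.inr (h.dist_three hv)

lemma dist_vals_rr (h : CB G A B) (e f : G.edgeSet) :
    (BS G).dist (Sum.inr e) (Sum.inr f) = 0 ∨ (BS G).dist (Sum.inr e) (Sum.inr f) = 2 ∨
      (BS G).dist (Sum.inr e) (Sum.inr f) = 4 := by
  by_cases hef : e = f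
  · subst hef; exact Or.inl SimpleGraph.dist_self
  · by_cases hsh : ∃ v, v ∈ e.1 ∧ v ∈ f.1
    · obtain ⟨v, hv, hv'⟩ := hsh
      exact Or.inr (Or.inl (dist_EE_two hef hv hv'))
    · push_neg at hsh
      exact Or.inr (Or.inr (h.dist_EE_four fun v hv hv' => hsh v hv hv'))

lemma dist_vals_rr' (h : CB G A B) {e f : G.edgeSet} (hef : e ≠ f) :
    (BS G).dist (Sum.inr e) (Sum.inr f) = 2 ∨ (BS G).dist (Sum.inr e) (Sum.inr f) = 4 := by
  by_cases hsh : ∃ v, v ∈ e.1 ∧ v ∈ f.1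
  · obtain ⟨v, hv, hv'⟩ := hsh
    exact Or.inl (dist_EE_two hef hv hv')
  · push_neg at hsh
    exact Or.inr (h.dist_EE_four fun v hv hv' => hsh v hv hv')

lemma exists_good (h : CB G A B) {m : ℕ} (hm : 4 ≤ m) (hA : A.card = m)
    (hB : B.card = 2 * m - 2) :
    ∃ W : Finset (V ⊕ G.edgeSet), IsResolving (BS G) ↑W ∧
      (∀ a ∈ W, ∀ b ∈ W, ¬ (BS G).Adj a b) ∧ W.card = 2 * m - 2 := by
  classical
  set aE : Fin m ≃ {x // x ∈ A} := (finCongr hA.symm).trans A.equivFin.symm with haE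
  set bE : Fin (2 * m - 2) ≃ {x // x ∈ B} := (finCongr hB.symm).trans B.equivFin.symm with hbE
  set bv : Fin (2 * m - 2) → V := fun j => (bE j : V) with hbvdef
  set av : Fin (2 * m - 2) → V := fun j => (aE ⟨j.1 / 2, by have := j.isLt; omega⟩ : V)
    with havdef
  have hbv : ∀ j, bv j ∈ B := fun j => (bE j).2
  have hav : ∀ j, av j ∈ A := fun j => (aE _).2
  have hbv_inj : ∀ j k, bv j = bv k → j = k := by
    intro j k hjk
    exact bE.injective (Subtype.ext hjk)
  have hav_iff : ∀ j k, av j = av k ↔ j.1 / 2 = k.1 / 2 := by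
    intro j k
    constructor
    · intro hjk
      have h1 := aE.injective (Subtype.ext hjk)
      exact congrArg Fin.val h1
    · intro hjk
      have : (⟨j.1 / 2, by have := j.isLt; omega⟩ : Fin m) = ⟨k.1 / 2, by have := k.isLt; omega⟩ :=
        Fin.ext hjk
      simp only [havdef, this]
  -- surjectivity of bv
  have hbv_surj : ∀ b ∈ B, ∃ j, bv j = b := by
    intro b hb
    exact ⟨bE.symm ⟨b, hb⟩, congrArg Subtype.val (bE.apply_symm_apply ⟨b, hb⟩)⟩
  -- partner
  have hpartner : ∀ j : Fin (2 * m - 2), ∃ j' : Fin (2 * m - 2),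
      j' ≠ j ∧ av j' = av j ∧ bv j' ≠ bv j := by
    intro j
    have hj := j.isLt
    refine ⟨⟨if j.1 % 2 = 0 then j.1 + 1 else j.1 - 1, by split <;> omega⟩, ?_, ?_, ?_⟩
    · intro hcon
      have h1 : (if j.1 % 2 = 0 then j.1 + 1 else j.1 - 1) = j.1 := congrArg Fin.val hcon
      split at h1 <;> omega
    · rw [hav_iff]
      show (if j.1 % 2 = 0 then j.1 + 1 else j.1 - 1) / 2 = j.1 / 2
      split <;> omega
    · intro hcon
      have h1 : (if j.1 % 2 = 0 then j.1 + 1 else j.1 - 1) = j.1 :=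
        congrArg Fin.val (hbv_inj _ _ hcon)
      split at h1 <;> omega
  -- A-side hitting
  have hhit : ∀ a ∈ A, ∀ a' ∈ A, a ≠ a' → ∃ j, av j = a ∨ av j = a' := by
    intro a ha a' ha' hne
    set i := aE.symm ⟨a, ha⟩ with hi
    set i' := aE.symm ⟨a', ha'⟩ with hi'
    have hii : i ≠ i' := by
      intro hcon
      apply hne
      have := congrArg aE hcon
      rw [aE.apply_symm_apply, aE.apply_symm_apply] at this
      exact congrArg Subtype.val this
    have hget : ∀ i0 : Fin m, i0.1 ≤ m - 2 → ∃ j, av j = (aE i0 : V) := by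
      intro i0 hi0
      refine ⟨⟨2 * i0.1, by omega⟩, ?_⟩
      simp only [havdef]
      congr 1
      congr 1
      apply Fin.ext
      show 2 * i0.1 / 2 = i0.1
      omega
    have hiv : i.1 < m := i.isLt
    have hiv' : i'.1 < m := i'.isLt
    have hne2 : i.1 ≠ i'.1 := fun hc => hii (Fin.ext hc)
    rcases (by omega : i.1 ≤ m - 2 ∨ i'.1 ≤ m - 2) with hc | hc
    · obtain ⟨j, hj⟩ := hget i hc
      refine ⟨j, Or.inl ?_⟩
      rw [hj, hi, Equiv.apply_symm_apply]
    · obtain ⟨j, hj⟩ := hget i' hc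
      refine ⟨j, Or.inr ?_⟩
      rw [hj, hi', Equiv.apply_symm_apply]
  -- the edges
  set ej : Fin (2 * m - 2) → G.edgeSet := fun j => h.E (hav j) (hbv j) with hejdef
  have hejval : ∀ j, (ej j).1 = s(av j, bv j) := fun j => rfl
  have hmem : ∀ (v : V) (j), v ∈ (ej j).1 ↔ v = av j ∨ v = bv j := by
    intro v j; rw [hejval]; exact Sym2.mem_iff
  set W : Finset (V ⊕ G.edgeSet) :=
    Finset.univ.image (fun j => (Sum.inr (ej j) : V ⊕ G.edgeSet)) with hWdef
  have hWmem : ∀ j, Sum.inr (ej j) ∈ W := by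
    intro j; exact Finset.mem_image_of_mem _ (Finset.mem_univ j)
  have hWshape : ∀ w ∈ W, ∃ j, w = Sum.inr (ej j) := by
    intro w hw
    obtain ⟨j, -, hj⟩ := Finset.mem_image.1 hw
    exact ⟨j, hj.symm⟩
  refine ⟨W, ?_, ?_, ?_⟩
  · -- resolving
    have hWc : ∀ j, (Sum.inr (ej j) : V ⊕ G.edgeSet) ∈ (↑W : Set (V ⊕ G.edgeSet)) :=
      fun j => Finset.mem_coe.2 (hWmem j)
    have hAne_bv : ∀ (v : V) (j), v ∈ A → v ≠ bv j :=
      fun v j hvA hc => h.disj v hvA (by rw [hc]; exact hbv j)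
    have hBne_av : ∀ (v : V) (j), v ∈ B → v ≠ av j :=
      fun v j hvB hc => h.disj v (by rw [hc]; exact hav j) hvB
    have d1 : ∀ (v : V) (j), (v = av j ∨ v = bv j) →
        (BS G).dist (Sum.inl v) (Sum.inr (ej j)) = 1 :=
      fun v j hv => BS_dist_one ((hmem v j).2 hv)
    have d3 : ∀ (v : V) (j), v ≠ av j → v ≠ bv j →
        (BS G).dist (Sum.inl v) (Sum.inr (ej j)) = 3 := by
      intro v j h1 h2
      apply h.dist_three
      rw [hmem]
      tauto
    have hmA : ∀ e : G.edgeSet, h.endA e ∈ e.1 := fun e => by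
      rw [h.mem_edge_iff]; left; rfl
    have hmB : ∀ e : G.edgeSet, h.endB e ∈ e.1 := fun e => by
      rw [h.mem_edge_iff]; right; rfl
    have hEB : ∀ j, h.endB (ej j) = bv j := fun j => (h.ends_unique (hav j) (hbv j) rfl).2
    have dE2 : ∀ (e : G.edgeSet) (j) (v : V), e ≠ ej j → v ∈ e.1 → (v = av j ∨ v = bv j) →
        (BS G).dist (Sum.inr e) (Sum.inr (ej j)) = 2 :=
      fun e j v hne hv hv' => dist_EE_two hne hv ((hmem v j).2 hv')
    have dE4 : ∀ (e : G.edgeSet) (j), h.endA e ≠ av j → h.endB e ≠ bv j →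
        (BS G).dist (Sum.inr e) (Sum.inr (ej j)) = 4 := by
      intro e j h1 h2
      apply h.dist_EE_four
      intro v hv hv'
      rw [h.mem_edge_iff] at hv
      rw [hmem] at hv'
      rcases hv with h3 | h3 <;> rcases hv' with h4 | h4
      · exact h1 (h3 ▸ h4)
      · exact h.disj (h.endA e) (h.endA_mem e) (by rw [h3.symm.trans h4]; exact hbv j)
      · exact h.disj (h.endB e) (by rw [h3.symm.trans h4]; exact hav j) (h.endB_mem e)
      · exact h2 (h3 ▸ h4)
    intro x y hxy
    cases x with
    | inl u =>
      cases y with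
      | inl u' =>
        have hu_ne : u ≠ u' := fun hc => hxy (by rw [hc])
        rcases h.cover u with huA | huB <;> rcases h.cover u' with hu'A | hu'B
        · obtain ⟨j, hj | hj⟩ := hhit u huA u' hu'A hu_ne
          · refine ⟨_, hWc j, ?_⟩
            rw [d1 u j (Or.inl hj.symm),
              d3 u' j (fun hc => hu_ne (hc.trans hj).symm) (hAne_bv u' j hu'A)]
            omega
          · refine ⟨_, hWc j, ?_⟩
            rw [d3 u j (fun hc => hu_ne (hc.trans hj)) (hAne_bv u j huA),
              d1 u' j (Or.inl hj.symm)]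
            omega
        · obtain ⟨j, hj⟩ := hbv_surj u' hu'B
          by_cases hau : av j = u
          · obtain ⟨j', hne', hav', hbv'⟩ := hpartner j
            refine ⟨_, hWc j', ?_⟩
            rw [d1 u j' (Or.inl (hav'.trans hau).symm),
              d3 u' j' (hBne_av u' j' hu'B) (fun hc => hbv' (hc.symm.trans hj.symm))]
            omega
          · refine ⟨_, hWc j, ?_⟩
            rw [d3 u j (fun hc => hau hc.symm) (hAne_bv u j huA), d1 u' j (Or.inr hj.symm)]
            omega
        · obtain ⟨j, hj⟩ := hbv_surj u huB
          by_cases hau : av j = u'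
          · obtain ⟨j', hne', hav', hbv'⟩ := hpartner j
            refine ⟨_, hWc j', ?_⟩
            rw [d3 u j' (hBne_av u j' huB) (fun hc => hbv' (hc.symm.trans hj.symm)),
              d1 u' j' (Or.inl (hav'.trans hau).symm)]
            omega
          · refine ⟨_, hWc j, ?_⟩
            rw [d1 u j (Or.inr hj.symm), d3 u' j (fun hc => hau hc.symm) (hAne_bv u' j hu'A)]
            omega
        · obtain ⟨j, hj⟩ := hbv_surj u huB
          refine ⟨_, hWc j, ?_⟩
          rw [d1 u j (Or.inr hj.symm),
            d3 u' j (hBne_av u' j hu'B) (fun hc => hu_ne (hc.trans hj).symm)]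
          omega
      | inr e =>
        refine ⟨_, hWc ⟨0, by omega⟩, ?_⟩
        rcases h.dist_vals_lr u (ej ⟨0, by omega⟩) with h1 | h1 <;>
          rcases h.dist_vals_rr e (ej ⟨0, by omega⟩) with h2 | h2 | h2 <;> omega
    | inr e =>
      cases y with
      | inl u =>
        refine ⟨_, hWc ⟨0, by omega⟩, ?_⟩
        rcases h.dist_vals_lr u (ej ⟨0, by omega⟩) with h1 | h1 <;>
          rcases h.dist_vals_rr e (ej ⟨0, by omega⟩) with h2 | h2 | h2 <;> omega
      | inr f =>
        have hef : e ≠ f := fun hc => hxy (by rw [hc])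
        by_cases hbb : h.endB e = h.endB f
        · have haa : h.endA e ≠ h.endA f := by
            intro hc
            exact hef (Subtype.ext (by rw [h.ends_eq e, h.ends_eq f, hc, hbb]))
          obtain ⟨j, hj | hj⟩ := hhit (h.endA e) (h.endA_mem e) (h.endA f) (h.endA_mem f) haa
          · by_cases hbj : bv j = h.endB e
            · have heq : ej j = e := Subtype.ext (by rw [hejval, h.ends_eq e, hj, hbj])
              refine ⟨_, hWc j, ?_⟩
              rw [heq]
              have h0 : (BS G).dist (Sum.inr e) (Sum.inr e) = 0 := SimpleGraph.dist_self
              have hv2 := h.dist_vals_rr' (show f ≠ e from fun hc => hef hc.symm)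
              omega
            · refine ⟨_, hWc j, ?_⟩
              have hd1 : (BS G).dist (Sum.inr e) (Sum.inr (ej j)) = 2 :=
                dE2 e j (h.endA e)
                  (fun hc => hbj ((congrArg h.endB hc).trans (hEB j)).symm)
                  (hmA e) (Or.inl hj.symm)
              have hd2 : (BS G).dist (Sum.inr f) (Sum.inr (ej j)) = 4 :=
                dE4 f j (fun hc => haa (hc.trans hj).symm) (fun hc => hbj (hbb.trans hc).symm)
              omega
          · by_cases hbj : bv j = h.endB f
            · have heq : ej j = f := Subtype.ext (by rw [hejval, h.ends_eq f, hj, hbj])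
              refine ⟨_, hWc j, ?_⟩
              rw [heq]
              have h0 : (BS G).dist (Sum.inr f) (Sum.inr f) = 0 := SimpleGraph.dist_self
              have hv2 := h.dist_vals_rr' hef
              omega
            · refine ⟨_, hWc j, ?_⟩
              have hd1 : (BS G).dist (Sum.inr f) (Sum.inr (ej j)) = 2 :=
                dE2 f j (h.endA f)
                  (fun hc => hbj ((congrArg h.endB hc).trans (hEB j)).symm)
                  (hmA f) (Or.inl hj.symm)
              have hd2 : (BS G).dist (Sum.inr e) (Sum.inr (ej j)) = 4 :=
                dE4 e j (fun hc => haa (hc.trans hj)) (fun hc => hbj (hc.symm.trans hbb))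
              omega
        · obtain ⟨jb, hjb⟩ := hbv_surj _ (h.endB_mem e)
          obtain ⟨jb', hjb'⟩ := hbv_surj _ (h.endB_mem f)
          by_cases h1 : av jb = h.endA f
          · by_cases h2 : av jb' = h.endA e
            · by_cases haa : h.endA e = h.endA f
              · have heq : ej jb = e :=
                  Subtype.ext (by rw [hejval, h.ends_eq e, hjb, h1, ← haa])
                refine ⟨_, hWc jb, ?_⟩
                rw [heq]
                have h0 : (BS G).dist (Sum.inr e) (Sum.inr e) = 0 := SimpleGraph.dist_self
                have hv2 := h.dist_vals_rr' (show f ≠ e from fun hc => hef hc.symm)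
                omega
              · obtain ⟨j', hne', hav', hbv'⟩ := hpartner jb
                refine ⟨_, hWc j', ?_⟩
                have hd1 : (BS G).dist (Sum.inr e) (Sum.inr (ej j')) = 4 :=
                  dE4 e j' (fun hc => haa (hc.trans (hav'.trans h1)))
                    (fun hc => hbv' (hc.symm.trans hjb.symm))
                have hd2 : (BS G).dist (Sum.inr f) (Sum.inr (ej j')) = 0 ∨
                    (BS G).dist (Sum.inr f) (Sum.inr (ej j')) = 2 := by
                  by_cases hfe : f = ej j'
                  · rw [hfe]; exact Or.inl SimpleGraph.dist_self
                  · exact Or.inr (dE2 f j' (h.endA f) hfe (hmA f)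
                      (Or.inl (hav'.trans h1).symm))
                rcases hd2 with hd2 | hd2 <;> omega
            · refine ⟨_, hWc jb', ?_⟩
              have hd1 : (BS G).dist (Sum.inr e) (Sum.inr (ej jb')) = 4 :=
                dE4 e jb' (fun hc => h2 hc.symm) (fun hc => hbb (hc.trans hjb'))
              have hd2 : (BS G).dist (Sum.inr f) (Sum.inr (ej jb')) = 0 ∨
                  (BS G).dist (Sum.inr f) (Sum.inr (ej jb')) = 2 := by
                by_cases hfe : f = ej jb'
                · rw [hfe]; exact Or.inl SimpleGraph.dist_self
                · exact Or.inr (dE2 f jb' (h.endB f) hfe (hmB f) (Or.inr hjb'.symm))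
              rcases hd2 with hd2 | hd2 <;> omega
          · refine ⟨_, hWc jb, ?_⟩
            have hd2 : (BS G).dist (Sum.inr f) (Sum.inr (ej jb)) = 4 :=
              dE4 f jb (fun hc => h1 hc.symm) (fun hc => hbb (hc.trans hjb).symm)
            have hd1 : (BS G).dist (Sum.inr e) (Sum.inr (ej jb)) = 0 ∨
                (BS G).dist (Sum.inr e) (Sum.inr (ej jb)) = 2 := by
              by_cases hfe : e = ej jb
              · rw [hfe]; exact Or.inl SimpleGraph.dist_self
              · exact Or.inr (dE2 e jb (h.endB e) hfe (hmB e) (Or.inr hjb.symm))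
            rcases hd1 with hd1 | hd1 <;> omega
  · -- independence
    intro x hx y hy hadj
    obtain ⟨j, rfl⟩ := hWshape x hx
    obtain ⟨k, rfl⟩ := hWshape y hy
    exact BS_adj_inr_inr hadj
  · -- cardinality
    rw [hWdef, Finset.card_image_of_injective _ ?_, Finset.card_univ, Fintype.card_fin]
    intro j k hjk
    rw [Sum.inr.injEq] at hjk
    apply hbv_inj
    have := congrArg Subtype.val hjk
    rw [hejval, hejval, Sym2.eq_iff] at this
    rcases this with ⟨-, h2⟩ | ⟨h1, h2⟩
    · exact h2
    · exact absurd h1 (h.ne_of_mem (hav j) (hbv k))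

end CB

namespace CB
variable {V : Type*} {G : SimpleGraph V} {A B : Finset V}

lemma lower (h : CB G A B) {m : ℕ} (hm : 4 ≤ m) (hA : A.card = m)
    (hB : B.card = 2 * m - 2) (W : Finset (V ⊕ G.edgeSet))
    (hres : IsResolving (BS G) ↑W) : 2 * m - 2 ≤ W.card := by
  classical
  by_contra hlt
  push_neg at hlt
  have hAne : A.Nonempty := Finset.card_pos.1 (by omega)
  have hBne : B.Nonempty := Finset.card_pos.1 (by omega)
  set ι : V ⊕ G.edgeSet → Option V :=
    Sum.elim (fun v => if v ∈ B then some v else none) (fun e => some (h.endB e)) with hιdef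
  have hι1 : ∀ v, ι (Sum.inl v) = if v ∈ B then some v else none := fun v => rfl
  have hι2 : ∀ e, ι (Sum.inr e) = some (h.endB e) := fun e => rfl
  set S : Finset V := B.filter (fun b => some b ∈ W.image ι) with hSdef
  have hSsub : S ⊆ B := Finset.filter_subset _ _
  have claim1 : ∀ b ∈ B, ∀ b' ∈ B, b ∉ S → b' ∉ S → b = b' := by
    intro b hb b' hb' hbS hb'S
    by_contra hne
    obtain ⟨w, hwW, hwd⟩ := hres (Sum.inl b) (Sum.inl b')
      (fun hc => hne (Sum.inl_injective hc))
    apply hwd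
    have hwW' : w ∈ W := hwW
    cases w with
    | inl v =>
      rcases h.cover v with hvA | hvB
      · rw [h.symm.dist_cross hb hvA, h.symm.dist_cross hb' hvA]
      · have hvb : v ≠ b := by
          intro hc
          exact hbS (Finset.mem_filter.2 ⟨hb,
            Finset.mem_image.2 ⟨_, hwW', by rw [hι1, if_pos hvB, hc]⟩⟩)
        have hvb' : v ≠ b' := by
          intro hc
          exact hb'S (Finset.mem_filter.2 ⟨hb',
            Finset.mem_image.2 ⟨_, hwW', by rw [hι1, if_pos hvB, hc]⟩⟩)
        rw [h.dist_BB hb hvB (fun hc => hvb hc.symm) hAne,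
          h.dist_BB hb' hvB (fun hc => hvb' hc.symm) hAne]
    | inr e =>
      have hbe : h.endB e ≠ b := by
        intro hc
        exact hbS (Finset.mem_filter.2 ⟨hb,
          Finset.mem_image.2 ⟨_, hwW', by rw [hι2, hc]⟩⟩)
      have hbe' : h.endB e ≠ b' := by
        intro hc
        exact hb'S (Finset.mem_filter.2 ⟨hb',
          Finset.mem_image.2 ⟨_, hwW', by rw [hι2, hc]⟩⟩)
      have hm1 : b ∉ e.1 := by
        rw [h.mem_edge_iff]
        rintro (hc | hc)
        · exact h.disj b (by rw [hc]; exact h.endA_mem e) hb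
        · exact hbe hc.symm
      have hm2 : b' ∉ e.1 := by
        rw [h.mem_edge_iff]
        rintro (hc | hc)
        · exact h.disj b' (by rw [hc]; exact h.endA_mem e) hb'
        · exact hbe' hc.symm
      rw [h.dist_three hm1, h.dist_three hm2]
  have hBS1 : (B \ S).card ≤ 1 := Finset.card_le_one.2 (by
    intro a ha b hb
    rw [Finset.mem_sdiff] at ha hb
    exact claim1 a ha.1 b hb.1 ha.2 hb.2)
  have hsd := Finset.card_sdiff_of_subset hSsub
  have hsle := Finset.card_le_card hSsub
  have hScard : 2 * m - 3 ≤ S.card := by omega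
  have hSim : S.image some ⊆ W.image ι := by
    intro o ho
    obtain ⟨b, hbS, rfl⟩ := Finset.mem_image.1 ho
    exact (Finset.mem_filter.1 hbS).2
  have hcard1 : S.card ≤ (W.image ι).card := by
    calc S.card = (S.image some).card :=
          (Finset.card_image_of_injective _ (Option.some_injective V)).symm
      _ ≤ _ := Finset.card_le_card hSim
  have hcard2 : (W.image ι).card ≤ W.card := Finset.card_image_le
  have hWcard : W.card = 2 * m - 3 := by omega
  have hSeq : S.card = 2 * m - 3 := by omega
  have himeq : S.image some = W.image ι := by
    apply Finset.eq_of_subset_of_card_le hSim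
    rw [Finset.card_image_of_injective _ (Option.some_injective V)]
    omega
  have hinj : ∀ w ∈ W, ∀ w' ∈ W, ι w = ι w' → w = w' := by
    have hc : (W.image ι).card = W.card := by
      rw [← himeq, Finset.card_image_of_injective _ (Option.some_injective V)]
      omega
    have h2 := Finset.card_image_iff.1 hc
    exact fun w hw w' hw' he => h2 (Finset.mem_coe.2 hw) (Finset.mem_coe.2 hw') he
  have hval : ∀ w ∈ W, ∃ b ∈ S, ι w = some b := by
    intro w hw
    have h1 : ι w ∈ W.image ι := Finset.mem_image_of_mem _ hw
    rw [← himeq] at h1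
    obtain ⟨b, hbS, hb⟩ := Finset.mem_image.1 h1
    exact ⟨b, hbS, hb.symm⟩
  -- T : covered A-ends
  set T : Finset V := A.filter (fun a => ∃ e : G.edgeSet, Sum.inr e ∈ W ∧ h.endA e = a)
    with hTdef
  have hTsub : T ⊆ A := Finset.filter_subset _ _
  have claim2 : ∀ a ∈ A, ∀ a' ∈ A, a ∉ T → a' ∉ T → a = a' := by
    intro a ha a' ha' haT ha'T
    by_contra hne
    obtain ⟨w, hwW, hwd⟩ := hres (Sum.inl a) (Sum.inl a')
      (fun hc => hne (Sum.inl_injective hc))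
    apply hwd
    have hwW' : w ∈ W := hwW
    cases w with
    | inl v =>
      by_cases hvB : v ∈ B
      · rw [h.dist_cross ha hvB, h.dist_cross ha' hvB]
      · obtain ⟨b, hbS, hbv⟩ := hval _ hwW'
        rw [hι1, if_neg hvB] at hbv
        exact absurd hbv (by simp)
    | inr e =>
      have h1 : h.endA e ≠ a := fun hc =>
        haT (Finset.mem_filter.2 ⟨ha, e, hwW', hc⟩)
      have h2 : h.endA e ≠ a' := fun hc =>
        ha'T (Finset.mem_filter.2 ⟨ha', e, hwW', hc⟩)
      have hm1 : a ∉ e.1 := by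
        rw [h.mem_edge_iff]
        rintro (hc | hc)
        · exact h1 hc.symm
        · exact h.disj a ha (by rw [hc]; exact h.endB_mem e)
      have hm2 : a' ∉ e.1 := by
        rw [h.mem_edge_iff]
        rintro (hc | hc)
        · exact h2 hc.symm
        · exact h.disj a' ha' (by rw [hc]; exact h.endB_mem e)
      rw [h.dist_three hm1, h.dist_three hm2]
  have hAT1 : (A \ T).card ≤ 1 := Finset.card_le_one.2 (by
    intro a ha b hb
    rw [Finset.mem_sdiff] at ha hb
    exact claim2 a ha.1 b hb.1 ha.2 hb.2)
  have htd := Finset.card_sdiff_of_subset hTsub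
  have htle := Finset.card_le_card hTsub
  have hTcard : m - 1 ≤ T.card := by omega
  -- WE and fibers
  set WE : Finset (V ⊕ G.edgeSet) := W.filter (fun w => w.isRight) with hWEdef
  have hWEsub : WE ⊆ W := Finset.filter_subset _ _
  set g : V ⊕ G.edgeSet → V := Sum.elim id (fun e => h.endA e) with hgdef
  have hgT : ∀ w ∈ WE, g w ∈ T := by
    intro w hw
    rw [hWEdef, Finset.mem_filter] at hw
    cases w with
    | inl v => simp at hw
    | inr e => exact Finset.mem_filter.2 ⟨h.endA_mem e, e, hw.1, rfl⟩
  have hsum : WE.card = ∑ a ∈ T, (WE.filter (fun w => g w = a)).card :=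
    Finset.card_eq_sum_card_fiberwise hgT
  set L : Finset V := T.filter (fun a => (WE.filter (fun w => g w = a)).card = 1) with hLdef
  have hLsub : L ⊆ T := Finset.filter_subset _ _
  have hfiber1 : ∀ a ∈ T, 1 ≤ (WE.filter (fun w => g w = a)).card := by
    intro a ha
    obtain ⟨haA, e, heW, hea⟩ := Finset.mem_filter.1 ha
    exact Finset.card_pos.2 ⟨Sum.inr e,
      Finset.mem_filter.2 ⟨Finset.mem_filter.2 ⟨heW, rfl⟩, hea⟩⟩
  have hLlower : 2 * T.card ≤ WE.card + L.card := by
    have hle : ∀ a ∈ T,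
        2 ≤ (WE.filter (fun w => g w = a)).card + (if a ∈ L then 1 else 0) := by
      intro a ha
      by_cases haL : a ∈ L
      · have := (Finset.mem_filter.1 haL).2
        rw [if_pos haL]
        omega
      · have h1 := hfiber1 a ha
        have h2 : (WE.filter (fun w => g w = a)).card ≠ 1 := fun hc =>
          haL (Finset.mem_filter.2 ⟨ha, hc⟩)
        rw [if_neg haL]
        omega
    calc 2 * T.card = ∑ _a ∈ T, 2 := by rw [Finset.sum_const, smul_eq_mul, mul_comm]
      _ ≤ ∑ a ∈ T, ((WE.filter (fun w => g w = a)).card + (if a ∈ L then 1 else 0)) :=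
          Finset.sum_le_sum hle
      _ = WE.card + L.card := by
          rw [Finset.sum_add_distrib, ← hsum, Finset.sum_ite_mem,
            Finset.inter_eq_right.2 hLsub, Finset.sum_const, smul_eq_mul, mul_one]
  by_cases hL2 : 2 ≤ L.card
  · -- two lonely A-ends : transposition pair is unresolved
    obtain ⟨a1, ha1L, a2, ha2L, ha12⟩ := Finset.one_lt_card.1 hL2
    have getu : ∀ a ∈ L, ∃ e : G.edgeSet, Sum.inr e ∈ W ∧ h.endA e = a ∧
        (∀ w ∈ WE, g w = a → w = Sum.inr e) := by
      intro a haL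
      obtain ⟨haT, hcard⟩ := Finset.mem_filter.1 haL
      obtain ⟨haA, e, heW, hea⟩ := Finset.mem_filter.1 haT
      refine ⟨e, heW, hea, ?_⟩
      intro w hw hgw
      obtain ⟨z, hz⟩ := Finset.card_eq_one.1 hcard
      have h1 : Sum.inr e ∈ WE.filter (fun w => g w = a) :=
        Finset.mem_filter.2 ⟨Finset.mem_filter.2 ⟨heW, rfl⟩, hea⟩
      have h2 : w ∈ WE.filter (fun w => g w = a) := Finset.mem_filter.2 ⟨hw, hgw⟩
      rw [hz, Finset.mem_singleton] at h1 h2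
      rw [h2, h1]
    obtain ⟨e1, he1W, he1a, he1u⟩ := getu a1 ha1L
    obtain ⟨e2, he2W, he2a, he2u⟩ := getu a2 ha2L
    have ha1A : a1 ∈ A := hTsub (hLsub ha1L)
    have ha2A : a2 ∈ A := hTsub (hLsub ha2L)
    have hb1B : h.endB e1 ∈ B := h.endB_mem e1
    have hb2B : h.endB e2 ∈ B := h.endB_mem e2
    have he12 : e1 ≠ e2 := by
      intro hc
      exact ha12 (he1a ▸ he2a ▸ congrArg h.endA hc)
    have hb12 : h.endB e1 ≠ h.endB e2 := by
      intro hc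
      exact he12 (Sum.inr_injective (hinj _ he1W _ he2W (by rw [hι2, hι2, hc])))
    -- the unresolved pair
    set x : V ⊕ G.edgeSet := Sum.inr (h.E ha1A hb2B) with hxdef
    set y : V ⊕ G.edgeSet := Sum.inr (h.E ha2A hb1B) with hydef
    have hxy : x ≠ y := by
      intro hc
      rw [hxdef, hydef, Sum.inr.injEq] at hc
      have hc2 : s(a1, h.endB e2) = s(a2, h.endB e1) := congrArg Subtype.val hc
      rw [Sym2.eq_iff] at hc2
      rcases hc2 with ⟨hc3, -⟩ | ⟨hc3, -⟩
      · exact ha12 hc3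
      · exact h.disj a1 ha1A (by rw [hc3]; exact hb1B)
    obtain ⟨w, hwW, hwd⟩ := hres x y hxy
    apply hwd
    have hwW' : w ∈ W := hwW
    have hxv : (h.E ha1A hb2B).1 = s(a1, h.endB e2) := rfl
    have hyv : (h.E ha2A hb1B).1 = s(a2, h.endB e1) := rfl
    cases w with
    | inl v =>
      by_cases hvB : v ∈ B
      · have hvb1 : v ≠ h.endB e1 := by
          intro hc
          have := hinj _ hwW' _ he1W (by rw [hι1, if_pos hvB, hι2, hc])
          simp at this
        have hvb2 : v ≠ h.endB e2 := by
          intro hc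
          have := hinj _ hwW' _ he2W (by rw [hι1, if_pos hvB, hι2, hc])
          simp at this
        have hm1 : v ∉ (h.E ha1A hb2B).1 := by
          rw [hxv, Sym2.mem_iff]
          rintro (hc | hc)
          · exact h.disj v (by rw [hc]; exact ha1A) hvB
          · exact hvb2 hc
        have hm2 : v ∉ (h.E ha2A hb1B).1 := by
          rw [hyv, Sym2.mem_iff]
          rintro (hc | hc)
          · exact h.disj v (by rw [hc]; exact ha2A) hvB
          · exact hvb1 hc
        have hd1 : (BS G).dist x (Sum.inl v) = 3 := by
          rw [hxdef, SimpleGraph.dist_comm]; exact h.dist_three hm1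
        have hd2 : (BS G).dist y (Sum.inl v) = 3 := by
          rw [hydef, SimpleGraph.dist_comm]; exact h.dist_three hm2
        rw [hd1, hd2]
      · obtain ⟨b, hbS, hbv⟩ := hval _ hwW'
        rw [hι1, if_neg hvB] at hbv
        exact absurd hbv (by simp)
    | inr f =>
      have ha1e1 : a1 ∈ e1.1 := by rw [h.mem_edge_iff]; left; exact he1a.symm
      have ha2e2 : a2 ∈ e2.1 := by rw [h.mem_edge_iff]; left; exact he2a.symm
      have hbe1 : h.endB e1 ∈ e1.1 := by rw [h.mem_edge_iff]; right; rfl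
      have hbe2 : h.endB e2 ∈ e2.1 := by rw [h.mem_edge_iff]; right; rfl
      by_cases hf1 : f = e1
      · subst hf1
        have hxne : h.E ha1A hb2B ≠ f := by
          intro hc
          have hc2 := congrArg Subtype.val hc
          rw [hxv, h.ends_eq f, Sym2.eq_iff] at hc2
          rcases hc2 with ⟨-, hc3⟩ | ⟨hc3, -⟩
          · exact hb12 hc3.symm
          · exact h.disj a1 ha1A (by rw [hc3]; exact h.endB_mem f)
        have hyne : h.E ha2A hb1B ≠ f := by
          intro hc
          have hc2 := congrArg Subtype.val hc
          rw [hyv, h.ends_eq f, Sym2.eq_iff] at hc2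
          rcases hc2 with ⟨hc3, -⟩ | ⟨hc3, -⟩
          · exact ha12 (hc3.trans he1a).symm
          · exact h.disj a2 ha2A (by rw [hc3]; exact h.endB_mem f)
        have hd1 : (BS G).dist x (Sum.inr f) = 2 :=
          dist_EE_two hxne (by rw [hxv, Sym2.mem_iff]; left; rfl) ha1e1
        have hd2 : (BS G).dist y (Sum.inr f) = 2 :=
          dist_EE_two hyne (by rw [hyv, Sym2.mem_iff]; right; rfl) hbe1
        rw [hd1, hd2]
      · by_cases hf2 : f = e2
        · subst hf2
          have hxne : h.E ha1A hb2B ≠ f := by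
            intro hc
            have hc2 := congrArg Subtype.val hc
            rw [hxv, h.ends_eq f, Sym2.eq_iff] at hc2
            rcases hc2 with ⟨hc3, -⟩ | ⟨hc3, -⟩
            · exact ha12 (hc3.trans he2a)
            · exact h.disj a1 ha1A (by rw [hc3]; exact h.endB_mem f)
          have hyne : h.E ha2A hb1B ≠ f := by
            intro hc
            have hc2 := congrArg Subtype.val hc
            rw [hyv, h.ends_eq f, Sym2.eq_iff] at hc2
            rcases hc2 with ⟨-, hc3⟩ | ⟨hc3, -⟩
            · exact hb12 hc3
            · exact h.disj a2 ha2A (by rw [hc3]; exact h.endB_mem f)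
          have hd1 : (BS G).dist x (Sum.inr f) = 2 :=
            dist_EE_two hxne (by rw [hxv, Sym2.mem_iff]; right; rfl) hbe2
          have hd2 : (BS G).dist y (Sum.inr f) = 2 :=
            dist_EE_two hyne (by rw [hyv, Sym2.mem_iff]; left; rfl) ha2e2
          rw [hd1, hd2]
        · -- generic : distance 4 to both
          have hwWE : Sum.inr f ∈ WE :=
            Finset.mem_filter.2 ⟨hwW', rfl⟩
          have hfa1 : h.endA f ≠ a1 := by
            intro hc
            exact hf1 (Sum.inr_injective (he1u _ hwWE hc))
          have hfa2 : h.endA f ≠ a2 := by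
            intro hc
            exact hf2 (Sum.inr_injective (he2u _ hwWE hc))
          have hfb1 : h.endB f ≠ h.endB e1 := by
            intro hc
            exact hf1 (Sum.inr_injective (hinj _ hwW' _ he1W (by rw [hι2, hι2, hc])))
          have hfb2 : h.endB f ≠ h.endB e2 := by
            intro hc
            exact hf2 (Sum.inr_injective (hinj _ hwW' _ he2W (by rw [hι2, hι2, hc])))
          have hd1 : (BS G).dist x (Sum.inr f) = 4 := by
            apply h.dist_EE_four
            intro v hv hv'
            rw [hxv, Sym2.mem_iff] at hv
            rw [h.mem_edge_iff] at hv'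
            rcases hv with hc | hc <;> rcases hv' with hc' | hc'
            · exact hfa1 (hc'.symm.trans hc)
            · exact h.disj a1 ha1A (by rw [hc.symm.trans hc']; exact h.endB_mem f)
            · exact h.disj (h.endA f) (h.endA_mem f) (by rw [hc'.symm.trans hc]; exact hb2B)
            · exact hfb2 ((hc'.symm.trans hc))
          have hd2 : (BS G).dist y (Sum.inr f) = 4 := by
            apply h.dist_EE_four
            intro v hv hv'
            rw [hyv, Sym2.mem_iff] at hv
            rw [h.mem_edge_iff] at hv'
            rcases hv with hc | hc <;> rcases hv' with hc' | hc'
            · exact hfa2 (hc'.symm.trans hc)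
            · exact h.disj a2 ha2A (by rw [hc.symm.trans hc']; exact h.endB_mem f)
            · exact h.disj (h.endA f) (h.endA_mem f) (by rw [hc'.symm.trans hc]; exact hb1B)
            · exact hfb1 ((hc'.symm.trans hc))
          rw [hd1, hd2]
  · -- at most one lonely A-end
    push_neg at hL2
    have hWEle : WE.card ≤ W.card := Finset.card_le_card hWEsub
    have hTm : T.card ≤ m := hA ▸ htle
    have hTle : T.card ≤ m - 1 := by omega
    have hWEge : 2 * m - 3 ≤ WE.card := by omega
    have hWE_eq_W : WE = W := Finset.eq_of_subset_of_card_le hWEsub (by omega)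
    have hnsubA : ¬ A ⊆ T := by
      intro hsub
      have := Finset.card_le_card hsub
      omega
    obtain ⟨a0, ha0A, ha0T⟩ := Finset.not_subset.1 hnsubA
    have hnsubB : ¬ B ⊆ S := by
      intro hsub
      have := Finset.card_le_card hsub
      omega
    obtain ⟨b0, hb0B, hb0S⟩ := Finset.not_subset.1 hnsubB
    obtain ⟨w, hwW, hwd⟩ := hres (Sum.inl a0) (Sum.inl b0)
      (fun hc => h.ne_of_mem ha0A hb0B (Sum.inl_injective hc))
    apply hwd
    have hwW' : w ∈ W := hwW
    have hwWE : w ∈ WE := hWE_eq_W ▸ hwW'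
    cases w with
    | inl v =>
      have := (Finset.mem_filter.1 hwWE).2
      simp at this
    | inr f =>
      have hfa : a0 ∉ f.1 := by
        rw [h.mem_edge_iff]
        rintro (hc | hc)
        · exact ha0T (Finset.mem_filter.2 ⟨ha0A, f, hwW', hc.symm⟩)
        · exact h.disj a0 ha0A (by rw [hc]; exact h.endB_mem f)
      have hfb : b0 ∉ f.1 := by
        rw [h.mem_edge_iff]
        rintro (hc | hc)
        · exact h.disj b0 (by rw [hc]; exact h.endA_mem f) hb0B
        · exact hb0S (Finset.mem_filter.2 ⟨hb0B,
            Finset.mem_image.2 ⟨_, hwW', by rw [hι2, hc]⟩⟩)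
      rw [h.dist_three hfa, h.dist_three hfb]


end CB

theorem CB.idim {V : Type*} {G : SimpleGraph V} {A B : Finset V} (h : CB G A B)
    {m : ℕ} (hm : 4 ≤ m) (hA : A.card = m) (hB : B.card = 2 * m - 2) :
    indepMetricDim (BS G) = 2 * m - 2 := by
  obtain ⟨W, hres, hind, hcard⟩ := h.exists_good hm hA hB
  have hmem : (2 * m - 2) ∈ {k | ∃ W : Finset (V ⊕ G.edgeSet), IsResolving (BS G) ↑W ∧
      (∀ a ∈ W, ∀ b ∈ W, ¬ (BS G).Adj a b) ∧ W.card = k} := ⟨W, hres, hind, hcard⟩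
  refine le_antisymm (Nat.sInf_le hmem) (le_csInf ⟨_, hmem⟩ ?_)
  rintro k ⟨W', hres', -, rfl⟩
  exact h.lower hm hA hB W' hres'

lemma zd_mk {N : ℕ} [NeZero N] (a b : ℕ) (ha : 2 ≤ a) (hb : 2 ≤ b) (hN : N = a * b)
    (k : ℕ) (hk1 : 1 ≤ k) (hk2 : k < a) :
    ∃ x : ZDVert N, x.1 = ((b * k : ℕ) : ZMod N) ∧ x.1.val = b * k := by
  have hlt : b * k < N := by
    have h1 : b * (k + 1) ≤ b * a := Nat.mul_le_mul_left b (by omega)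
    have h2 : b * (k + 1) = b * k + b := by ring
    rw [hN, mul_comm a b]
    omega
  have hval : ((b * k : ℕ) : ZMod N).val = b * k := by
    rw [ZMod.val_natCast, Nat.mod_eq_of_lt hlt]
  have haN : (a : ℕ) < N := by rw [hN]; nlinarith
  refine ⟨⟨((b * k : ℕ) : ZMod N), ?_, ((a : ℕ) : ZMod N), ?_, ?_⟩, rfl, hval⟩
  · intro hc
    rw [hc, ZMod.val_zero] at hval
    have : 0 < b * k := by positivity
    omega
  · intro hc
    have hva : ((a : ℕ) : ZMod N).val = a := by
      rw [ZMod.val_natCast, Nat.mod_eq_of_lt haN]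
    rw [hc, ZMod.val_zero] at hva
    omega
  · rw [← Nat.cast_mul, show b * k * a = k * (a * b) by ring, ← hN, Nat.cast_mul,
      ZMod.natCast_self, mul_zero]

lemma zd_card {N : ℕ} [NeZero N] [Fintype (ZDVert N)] [DecidableEq (ZDVert N)]
    (a b : ℕ) (ha : a.Prime) (hb : b.Prime) (hab : a ≠ b) (hN : N = a * b) :
    (Finset.univ.filter (fun x : ZDVert N => b ∣ x.1.val)).card = a - 1 := by
  classical
  have ha1 : 2 ≤ a := ha.two_le
  have hb1 : 2 ≤ b := hb.two_le
  have hbpos : 0 < b := by omega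
  rw [← Finset.card_range (a - 1)]
  apply Finset.card_bij (i := fun x _ => x.1.val / b - 1)
  · -- maps into range
    intro x hx
    rw [Finset.mem_filter] at hx
    obtain ⟨-, k, hk⟩ := hx
    have hvlt : x.1.val < N := ZMod.val_lt x.1
    have hv0 : x.1.val ≠ 0 := fun hc => x.2.1 ((ZMod.val_eq_zero x.1).1 hc)
    rw [Finset.mem_range]
    rw [hk] at hvlt hv0 ⊢
    rw [Nat.mul_div_cancel_left k hbpos]
    rw [hN, mul_comm a b] at hvlt
    have : k < a := by
      by_contra hc
      push_neg at hc
      exact absurd (Nat.mul_le_mul_left b hc) (by omega)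
    omega
  · -- injective
    intro x hx y hy hxy
    rw [Finset.mem_filter] at hx hy
    obtain ⟨-, k, hk⟩ := hx
    obtain ⟨-, l, hl⟩ := hy
    have hk0 : k ≠ 0 := by
      intro hc
      exact x.2.1 ((ZMod.val_eq_zero x.1).1 (by rw [hk, hc, mul_zero]))
    have hl0 : l ≠ 0 := by
      intro hc
      exact y.2.1 ((ZMod.val_eq_zero y.1).1 (by rw [hl, hc, mul_zero]))
    rw [hk, hl, Nat.mul_div_cancel_left k hbpos, Nat.mul_div_cancel_left l hbpos] at hxy
    have hkl : k = l := by omega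
    have hveq : x.1.val = y.1.val := by rw [hk, hl, hkl]
    exact Subtype.ext (ZMod.val_injective N hveq)
  · -- surjective
    intro i hi
    rw [Finset.mem_range] at hi
    obtain ⟨x, hx1, hx2⟩ := zd_mk a b ha1 hb1 hN (i + 1) (by omega) (by omega)
    refine ⟨x, Finset.mem_filter.2 ⟨Finset.mem_univ _, ⟨i + 1, hx2⟩⟩, ?_⟩
    rw [hx2, Nat.mul_div_cancel_left _ hbpos]
    omega

theorem stmt6 (p q : ℕ) (hp : p.Prime) (hq : q.Prime) (hop : Odd p) (hoq : Odd q)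
    (hpq : p ≠ q) (hp5 : 5 ≤ p) (hqp : p < q) (hq2p : q = 2 * p - 3) :
    indepMetricDim (BS (zdGraph (p * q))) = q - 1 := by
  classical
  have hq7 : 7 ≤ q := by omega
  haveI : NeZero (p * q) := ⟨by positivity⟩
  haveI hfin : Fintype (ZDVert (p * q)) := by unfold ZDVert; infer_instance
  haveI hdeq : DecidableEq (ZDVert (p * q)) := by unfold ZDVert; infer_instance
  have hcop : Nat.Coprime p q := (Nat.coprime_primes hp hq).2 hpq
  set A : Finset (ZDVert (p * q)) :=
    Finset.univ.filter (fun x : ZDVert (p * q) => q ∣ x.1.val) with hAdef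
  set B : Finset (ZDVert (p * q)) :=
    Finset.univ.filter (fun x : ZDVert (p * q) => p ∣ x.1.val) with hBdef
  have hmul0 : ∀ x y : ZMod (p * q), x * y = 0 ↔ (p * q) ∣ x.val * y.val := by
    intro x y
    rw [← ZMod.val_eq_zero, ZMod.val_mul]
    exact Nat.dvd_iff_mod_eq_zero.symm
  have hcoverval : ∀ x : ZDVert (p * q), p ∣ x.1.val ∨ q ∣ x.1.val := by
    intro x
    obtain ⟨hx0, b, hb0, hxb⟩ := x.2
    have hdvd : (p * q) ∣ x.1.val * b.val := (hmul0 _ _).1 hxb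
    by_contra hcon
    push_neg at hcon
    obtain ⟨hnp, hnq⟩ := hcon
    have hpb : p ∣ b.val :=
      ((Nat.Prime.dvd_mul hp).1 (dvd_trans ⟨q, rfl⟩ hdvd)).resolve_left hnp
    have hqb : q ∣ b.val :=
      ((Nat.Prime.dvd_mul hq).1 (dvd_trans ⟨p, mul_comm p q⟩ hdvd)).resolve_left hnq
    have hNb : (p * q) ∣ b.val := Nat.Coprime.mul_dvd_of_dvd_of_dvd hcop hpb hqb
    have hb00 : b.val = 0 := Nat.eq_zero_of_dvd_of_lt hNb (ZMod.val_lt b)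
    exact hb0 ((ZMod.val_eq_zero b).1 hb00)
  have hnotboth : ∀ x : ZDVert (p * q), p ∣ x.1.val → q ∣ x.1.val → False := by
    intro x h1 h2
    have hNx : (p * q) ∣ x.1.val := hcop.mul_dvd_of_dvd_of_dvd h1 h2
    have h0 : x.1.val = 0 := Nat.eq_zero_of_dvd_of_lt hNx (ZMod.val_lt x.1)
    exact x.2.1 ((ZMod.val_eq_zero x.1).1 h0)
  have hmemA : ∀ x : ZDVert (p * q), q ∣ x.1.val → x ∈ A :=
    fun x hx => Finset.mem_filter.2 ⟨Finset.mem_univ _, hx⟩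
  have hmemB : ∀ x : ZDVert (p * q), p ∣ x.1.val → x ∈ B :=
    fun x hx => Finset.mem_filter.2 ⟨Finset.mem_univ _, hx⟩
  have hA' : ∀ x : ZDVert (p * q), x ∈ A → q ∣ x.1.val := fun x hx =>
    (Finset.mem_filter.1 hx).2
  have hB' : ∀ x : ZDVert (p * q), x ∈ B → p ∣ x.1.val := fun x hx =>
    (Finset.mem_filter.1 hx).2
  have hCB : CB (zdGraph (p * q)) A B := by
    constructor
    · intro v hvA hvB
      exact hnotboth v (hB' v hvB) (hA' v hvA)
    · intro v
      rcases hcoverval v with h1 | h1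
      · exact Or.inr (hmemB v h1)
      · exact Or.inl (hmemA v h1)
    · intro x y
      constructor
      · intro hadj
        obtain ⟨hne, hprod⟩ : x ≠ y ∧ x.1 * y.1 = 0 := hadj
        have hdvd := (hmul0 _ _).1 hprod
        rcases hcoverval x with h1 | h1
        · have hq_not : ¬ q ∣ x.1.val := fun hc => hnotboth x h1 hc
          have hqy : q ∣ y.1.val :=
            ((hq.dvd_mul).1 (dvd_trans ⟨p, mul_comm p q⟩ hdvd)).resolve_left hq_not
          exact Or.inr ⟨hmemB x h1, hmemA y hqy⟩
        · have hp_not : ¬ p ∣ x.1.val := fun hc => hnotboth x hc h1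
          have hpy : p ∣ y.1.val :=
            ((hp.dvd_mul).1 (dvd_trans ⟨q, rfl⟩ hdvd)).resolve_left hp_not
          exact Or.inl ⟨hmemA x h1, hmemB y hpy⟩
      · rintro (⟨hxA, hyB⟩ | ⟨hxB, hyA⟩)
        · have hqx := hA' x hxA
          have hpy := hB' y hyB
          have hne : x ≠ y := fun hc => hnotboth x (hc ▸ hpy) hqx
          refine ⟨hne, (hmul0 _ _).2 ?_⟩
          have hd := mul_dvd_mul hqx hpy
          rwa [mul_comm q p] at hd
        · have hpx := hB' x hxB
          have hqy := hA' y hyA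
          have hne : x ≠ y := fun hc => hnotboth x hpx (hc ▸ hqy)
          refine ⟨hne, (hmul0 _ _).2 ?_⟩
          exact mul_dvd_mul hpx hqy
  have hAcard : A.card = p - 1 := zd_card p q hp hq hpq rfl
  have hBcard : B.card = q - 1 := zd_card q p hq hp (Ne.symm hpq) (mul_comm p q)
  have hfinal := hCB.idim (m := p - 1) (by omega) hAcard (by rw [hBcard]; omega)
  rw [hfinal]
  omega
end

section
/- Let q be a prime with q > 3. In the barycentric subdivision BS(Γ(Z_{3q})), let a_i and a_j be two distinct original vertices corresponding to nonzero multiples of 3 in Z_{3q} (i.e. nonzero elements divisible by 3 and not by q), and let x be any vertex of BS(Γ(Z_{3q})) distinct from a_i and a_j. If d(a_i, x) ≠ 1 and d(a_j, x) ≠ 1, then d(a_i, x) = d(a_j, x), where d denotes graph distance in BS(Γ(Z_{3q})). -/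
open SimpleGraph

/- ### Auxiliary results -/

lemma iso_dist_le {V V' : Type*} {G : SimpleGraph V} {G' : SimpleGraph V'}
    (φ : G ≃g G') (a b : V) : G'.dist (φ a) (φ b) ≤ G.dist a b := by
  by_cases h : G.Reachable a b
  · obtain ⟨p, hp⟩ := h.exists_walk_length_eq_dist
    calc G'.dist (φ a) (φ b) ≤ (p.map φ.toHom).length := SimpleGraph.dist_le _
    _ = G.dist a b := by rw [SimpleGraph.Walk.length_map, hp]
  · have h' : ¬ G'.Reachable (φ a) (φ b) := by
      intro ⟨p⟩
      exact h ⟨(p.map φ.symm.toHom).copy (by simp) (by simp)⟩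
    simp [SimpleGraph.dist_eq_zero_of_not_reachable h']

lemma iso_dist_eq {V V' : Type*} {G : SimpleGraph V} {G' : SimpleGraph V'}
    (φ : G ≃g G') (a b : V) : G'.dist (φ a) (φ b) = G.dist a b := by
  refine le_antisymm (iso_dist_le φ a b) ?_
  have := iso_dist_le φ.symm (φ a) (φ b)
  simpa using this

lemma key (q : ℕ) (hq : q.Prime) (hq3 : 3 < q)
    (a b : ZMod (3*q)) (ha : (3:ZMod (3*q)) ∣ a) (ha0 : a ≠ 0)
    (hb : (3:ZMod (3*q)) ∣ b) (hb0 : b ≠ 0) (c : ZMod (3*q)) :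
    a * c = 0 ↔ b * c = 0 := by
  haveI : Fact q.Prime := ⟨hq⟩
  have hcop : Nat.Coprime 3 q := (Nat.coprime_primes Nat.prime_three hq).mpr (by omega)
  set e := ZMod.chineseRemainder hcop with he
  have main : ∀ d : ZMod (3*q), (3:ZMod (3*q)) ∣ d → d ≠ 0 → (∀ c : ZMod (3*q),
      d * c = 0 ↔ (e c).2 = 0) := by
    intro d hd hd0 c
    obtain ⟨k, rfl⟩ := hd
    have h1 : (e (3 * k)).1 = 0 := by
      rw [map_mul]
      have h3 : (e 3).1 = 0 := by
        have h4 : e ((3:ℕ) : ZMod (3*q)) = ((3:ℕ) : ZMod 3 × ZMod q) := map_natCast _ 3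
        rw [show ((3:ZMod (3*q))) = ((3:ℕ) : ZMod (3*q)) by norm_cast]
        rw [h4, Prod.fst_natCast]
        decide
      simp [h3]
    have h2 : (e (3 * k)).2 ≠ 0 := by
      intro h
      apply hd0
      have : e (3*k) = e 0 := by
        rw [map_zero]
        exact Prod.ext h1 (by simpa using h)
      exact e.injective this
    constructor
    · intro h
      have := congrArg e h
      rw [map_mul, map_zero] at this
      have h2' := congrArg Prod.snd this
      simp only [Prod.snd_mul, Prod.snd_zero] at h2'
      exact (mul_eq_zero.mp h2').resolve_left h2
    · intro h
      apply e.injective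
      rw [map_mul, map_zero]
      refine Prod.ext ?_ ?_
      · have := h1
        rw [map_mul] at this
        simp only [Prod.fst_mul]
        rcases mul_eq_zero.mp this with h' | h' <;> simp [Prod.fst_mul, h']
      · simp [Prod.snd_mul, h]
  rw [main a ha ha0 c, main b hb hb0 c]

instance (n : ℕ) : DecidableEq (ZDVert n) := by
  unfold ZDVert; infer_instance

lemma bs_adj_inl_inr {V : Type*} {G : SimpleGraph V} {v : V} {e : G.edgeSet}
    (h : v ∈ e.1) : (BS G).Adj (Sum.inl v) (Sum.inr e) :=
  Or.inl ⟨v, e, rfl, rfl, h⟩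

lemma bs_map_adj {W W' : Type*} {H : SimpleGraph W} {H' : SimpleGraph W'}
    (ψ : H ≃g H') (x y : W ⊕ H.edgeSet) (h : (BS H).Adj x y) :
    (BS H').Adj (Equiv.sumCongr ψ.toEquiv ψ.mapEdgeSet x)
      (Equiv.sumCongr ψ.toEquiv ψ.mapEdgeSet y) := by
  rcases h with ⟨v, e, rfl, rfl, h⟩ | ⟨v, e, rfl, rfl, h⟩
  · refine Or.inl ⟨ψ v, ψ.mapEdgeSet e, rfl, rfl, ?_⟩
    show ψ v ∈ Sym2.map ψ e.1
    rw [Sym2.mem_map]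
    exact ⟨v, h, rfl⟩
  · refine Or.inr ⟨ψ v, ψ.mapEdgeSet e, rfl, rfl, ?_⟩
    show ψ v ∈ Sym2.map ψ e.1
    rw [Sym2.mem_map]
    exact ⟨v, h, rfl⟩

/-- The barycentric subdivision functor on isomorphisms. -/
def bsIso {V V' : Type*} {G : SimpleGraph V} {G' : SimpleGraph V'} (φ : G ≃g G') :
    BS G ≃g BS G' where
  toEquiv := Equiv.sumCongr φ.toEquiv φ.mapEdgeSet
  map_rel_iff' := by
    intro x y
    constructor
    · intro h
      have := bs_map_adj φ.symm _ _ h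
      have hx : ∀ z : V ⊕ G.edgeSet,
          Equiv.sumCongr φ.symm.toEquiv φ.symm.mapEdgeSet
            (Equiv.sumCongr φ.toEquiv φ.mapEdgeSet z) = z := by
        rintro (v | e)
        · simp
        · simp only [Equiv.sumCongr_apply, Sum.map_inr, Sum.inr.injEq]
          exact φ.mapEdgeSet.left_inv e
      rwa [hx, hx] at this
    · exact bs_map_adj φ x y

theorem stmt12 (q : ℕ) (hq : q.Prime) (hq3 : 3 < q)
    (ai aj : ZDVert (3 * q))
    (hi : (3 : ZMod (3 * q)) ∣ ai.1) (hj : (3 : ZMod (3 * q)) ∣ aj.1)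
    (hij : ai ≠ aj)
    (x : ZDVert (3 * q) ⊕ (zdGraph (3 * q)).edgeSet)
    (hxi : x ≠ Sum.inl ai) (hxj : x ≠ Sum.inl aj)
    (hdi : (BS (zdGraph (3 * q))).dist (Sum.inl ai) x ≠ 1)
    (hdj : (BS (zdGraph (3 * q))).dist (Sum.inl aj) x ≠ 1) :
    (BS (zdGraph (3 * q))).dist (Sum.inl ai) x =
      (BS (zdGraph (3 * q))).dist (Sum.inl aj) x := by
  let σ := Equiv.swap ai aj
  have swap_mul : ∀ u : ZDVert (3*q), ∀ c : ZMod (3*q),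
      ((σ u).1 * c = 0 ↔ u.1 * c = 0) := by
    intro u c
    show (Equiv.swap ai aj u).1 * c = 0 ↔ u.1 * c = 0
    rcases eq_or_ne u ai with rfl | h1
    · rw [Equiv.swap_apply_left]
      exact key q hq hq3 aj.1 u.1 hj aj.2.1 hi u.2.1 c
    rcases eq_or_ne u aj with rfl | h2
    · rw [Equiv.swap_apply_right]
      exact key q hq hq3 ai.1 u.1 hi ai.2.1 hj u.2.1 c
    · rw [Equiv.swap_apply_of_ne_of_ne h1 h2]
  have φrel : ∀ u v : ZDVert (3*q),
      (zdGraph (3*q)).Adj (σ u) (σ v) ↔ (zdGraph (3*q)).Adj u v := by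
    intro u v
    show (σ u ≠ σ v ∧ (σ u).1 * (σ v).1 = 0) ↔ (u ≠ v ∧ u.1 * v.1 = 0)
    apply and_congr
    · exact not_congr σ.apply_eq_iff_eq
    · calc (σ u).1 * (σ v).1 = 0 ↔ u.1 * (σ v).1 = 0 := swap_mul u _
      _ ↔ (σ v).1 * u.1 = 0 := iff_of_eq (congrArg (· = 0) (mul_comm _ _))
      _ ↔ v.1 * u.1 = 0 := swap_mul v _
      _ ↔ u.1 * v.1 = 0 := iff_of_eq (congrArg (· = 0) (mul_comm _ _))
  let φ : zdGraph (3*q) ≃g zdGraph (3*q) := ⟨σ, φrel _ _⟩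
  let ψ : BS (zdGraph (3*q)) ≃g BS (zdGraph (3*q)) := bsIso φ
  have h1 : ψ (Sum.inl ai) = Sum.inl aj := by
    show Sum.inl (Equiv.swap ai aj ai) = Sum.inl aj
    rw [Equiv.swap_apply_left]
  have h2 : ψ x = x := by
    rcases x with v | e
    · have hv1 : v ≠ ai := fun h => hxi (by rw [h])
      have hv2 : v ≠ aj := fun h => hxj (by rw [h])
      show Sum.inl (Equiv.swap ai aj v) = Sum.inl v
      rw [Equiv.swap_apply_of_ne_of_ne hv1 hv2]
    · have hai : ai ∉ e.1 := fun h =>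
        hdi (SimpleGraph.dist_eq_one_iff_adj.mpr (bs_adj_inl_inr h))
      have haj : aj ∉ e.1 := fun h =>
        hdj (SimpleGraph.dist_eq_one_iff_adj.mpr (bs_adj_inl_inr h))
      show Sum.inr (φ.mapEdgeSet e) = Sum.inr e
      congr 1
      apply Subtype.ext
      show Sym2.map (Equiv.swap ai aj) e.1 = e.1
      obtain ⟨s, hs⟩ := e
      induction s with
      | _ u w =>
        simp only at *
        rw [Sym2.map_pair_eq]
        have hu1 : u ≠ ai := fun h => hai (h ▸ Sym2.mem_mk_left u w)
        have hu2 : u ≠ aj := fun h => haj (h ▸ Sym2.mem_mk_left u w)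
        have hw1 : w ≠ ai := fun h => hai (h ▸ Sym2.mem_mk_right u w)
        have hw2 : w ≠ aj := fun h => haj (h ▸ Sym2.mem_mk_right u w)
        rw [Equiv.swap_apply_of_ne_of_ne hu1 hu2,
          Equiv.swap_apply_of_ne_of_ne hw1 hw2]
  rw [← iso_dist_eq ψ (Sum.inl ai) x, h1, h2]
end
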